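/- arXiv:1907.01155 — 7 statements merged into one kernel-verified Lean document; each statement's English description precedes it below -/
import Mathlib

section
/- Let (M,d) be a metric space and let f be a finitely supported real-valued function on M with zero sum. Then there exists a transportation plan solving f whose cost equals the transportation cost norm ||f||_TC; i.e., the infimum in the definition of the transportation cost norm is attained. -/
/-!
A transportation plan is recorded by its flow, the weight it moves along each arc `(p, q)`.
A point `v` outside the support of `f` carries no net mass, so the mass entering `v` and the mass
leaving it can be recoupled directly (the product coupling of the two distributions); by the
triangle inequality through `v` this does not increase the cost. Eliminating such points one at a
time, the infimum may be taken over flows on `supp f × supp f`. Off the diagonal, a flow of cost at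
most `C` has each coordinate bounded by `C / d(p, q)`, and the diagonal carries neither mass
balance nor cost, so these flows form a compact set on which the continuous cost attains its
minimum.
-/

/-- The transportation cost (Kantorovich–Rubinstein) norm of a finitely supported
zero-sum function `f` on a metric space: the infimum of costs of transportation
plans solving `f`. -/
noncomputable def tcCost {M : Type*} [MetricSpace M] (f : M →₀ ℝ) : ℝ :=
  sInf {c : ℝ | ∃ (n : ℕ) (a : Fin n → ℝ) (x y : Fin n → M),
    (∀ i, 0 ≤ a i) ∧
    f = ∑ i, a i • (Finsupp.single (x i) 1 - Finsupp.single (y i) 1) ∧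
    c = ∑ i, a i * dist (x i) (y i)}

open Finset

section Flow

variable {M : Type*}

noncomputable def flowDiv (P : Finset M) (φ : M × M → ℝ) : M →₀ ℝ :=
  ∑ pq ∈ P ×ˢ P, φ pq • (Finsupp.single pq.1 1 - Finsupp.single pq.2 1)

def flowCost [PseudoMetricSpace M] (P : Finset M) (φ : M × M → ℝ) : ℝ :=
  ∑ pq ∈ P ×ˢ P, φ pq * dist pq.1 pq.2

variable {P : Finset M} {φ ψ : M × M → ℝ} {u v : M}

theorem flowDiv_add : flowDiv P (φ + ψ) = flowDiv P φ + flowDiv P ψ := by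
  simp only [flowDiv, Pi.add_apply, add_smul, sum_add_distrib]

theorem flowCost_add [PseudoMetricSpace M] :
    flowCost P (φ + ψ) = flowCost P φ + flowCost P ψ := by
  simp only [flowCost, Pi.add_apply, add_mul, sum_add_distrib]

theorem mul_dist_le_flowCost [PseudoMetricSpace M] (hφ : 0 ≤ φ) {pq : M × M}
    (hpq : pq ∈ P ×ˢ P) : φ pq * dist pq.1 pq.2 ≤ flowCost P φ :=
  single_le_sum (f := fun pq => φ pq * dist pq.1 pq.2)
    (fun pq _ => mul_nonneg (hφ pq) dist_nonneg) hpq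

variable [DecidableEq M]

theorem flowDiv_apply (hu : u ∈ P) :
    flowDiv P φ u = ∑ q ∈ P, φ (u, q) - ∑ p ∈ P, φ (p, u) := by
  simp only [flowDiv, Finsupp.finsetSum_apply, Finsupp.smul_apply, Finsupp.sub_apply,
    Finsupp.single_apply, smul_eq_mul, mul_sub, sum_sub_distrib, sum_product, mul_ite, mul_one,
    mul_zero]
  rw [sum_comm (f := fun p q => if q = u then φ (p, q) else 0)]
  simp [hu]

theorem flowDiv_apply_of_notMem (hu : u ∉ P) : flowDiv P φ u = 0 := by
  simp only [flowDiv, Finsupp.finsetSum_apply, Finsupp.smul_apply, Finsupp.sub_apply,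
    Finsupp.single_apply]
  refine sum_eq_zero fun pq hpq => ?_
  rw [mem_product] at hpq
  rw [if_neg (ne_of_mem_of_not_mem hpq.1 hu), if_neg (ne_of_mem_of_not_mem hpq.2 hu)]
  simp

theorem flowDiv_erase_apply (hv : v ∈ P) (hu : u ∈ P.erase v) :
    flowDiv P φ u = flowDiv (P.erase v) φ u + φ (u, v) - φ (v, u) := by
  rw [flowDiv_apply (mem_of_mem_erase hu), flowDiv_apply hu, ← add_sum_erase P _ hv,
    ← add_sum_erase P (fun p => φ (p, u)) hv]
  ring

theorem flowCost_erase [PseudoMetricSpace M] (hv : v ∈ P) :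
    flowCost P φ = flowCost (P.erase v) φ + ∑ p ∈ P.erase v, φ (p, v) * dist p v
      + ∑ q ∈ P.erase v, φ (v, q) * dist v q := by
  simp only [flowCost, sum_product, ← add_sum_erase P _ hv, dist_self, mul_zero, zero_add,
    sum_add_distrib]
  ring

end Flow

section Coupling

variable {M : Type*} {P : Finset M} {a b : M → ℝ} {T : ℝ}

noncomputable def coupling (a b : M → ℝ) (T : ℝ) : M × M → ℝ := fun pq => a pq.1 * b pq.2 / T

theorem coupling_nonneg (ha : 0 ≤ a) (hb : 0 ≤ b) (hT : 0 ≤ T) : 0 ≤ coupling a b T :=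
  fun _ => div_nonneg (mul_nonneg (ha _) (hb _)) hT

theorem flowDiv_coupling_apply [DecidableEq M] (ha : 0 ≤ a) (hb : 0 ≤ b)
    (hsa : ∑ p ∈ P, a p = T) (hsb : ∑ q ∈ P, b q = T) {u : M} (hu : u ∈ P) :
    flowDiv P (coupling a b T) u = a u - b u := by
  have hout : ∑ q ∈ P, coupling a b T (u, q) = a u := by
    simp only [coupling, ← sum_div, ← mul_sum, hsb]
    exact mul_div_cancel_of_imp fun hT =>
      (sum_eq_zero_iff_of_nonneg fun p _ => ha p).1 (hsa.trans hT) u hu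
  have hin : ∑ p ∈ P, coupling a b T (p, u) = b u := by
    simp only [coupling, ← sum_div, ← sum_mul, hsa, mul_comm T]
    exact mul_div_cancel_of_imp fun hT =>
      (sum_eq_zero_iff_of_nonneg fun q _ => hb q).1 (hsb.trans hT) u hu
  rw [flowDiv_apply hu, hout, hin]

theorem flowCost_coupling_le [PseudoMetricSpace M] (ha : 0 ≤ a) (hb : 0 ≤ b)
    (hsa : ∑ p ∈ P, a p = T) (hsb : ∑ q ∈ P, b q = T) (v : M) :
    flowCost P (coupling a b T) ≤ ∑ p ∈ P, a p * dist p v + ∑ q ∈ P, b q * dist v q := by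
  have hT : 0 ≤ T := hsa ▸ sum_nonneg fun p _ => ha p
  calc flowCost P (coupling a b T)
      ≤ ∑ pq ∈ P ×ˢ P, coupling a b T pq * (dist pq.1 v + dist v pq.2) :=
        sum_le_sum fun pq _ =>
          mul_le_mul_of_nonneg_left (dist_triangle _ _ _) (coupling_nonneg ha hb hT pq)
    _ = ∑ p ∈ P, a p * dist p v * T / T + ∑ q ∈ P, b q * dist v q * T / T := by
        simp only [coupling, sum_product, mul_add, sum_add_distrib]
        rw [sum_comm (s := P) (t := P) (f := fun p q => a p * b q / T * dist v q)]
        congr 1 <;> refine sum_congr rfl fun p _ => ?_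
        · rw [← hsb, mul_sum, sum_div]
          exact sum_congr rfl fun q _ => by ring
        · rw [← hsa, mul_sum, sum_div]
          exact sum_congr rfl fun q _ => by ring
    _ = ∑ p ∈ P, a p * dist p v + ∑ q ∈ P, b q * dist v q := by
        congr 1 <;> refine sum_congr rfl fun p hp => mul_div_cancel_of_imp fun hT => ?_
        · rw [(sum_eq_zero_iff_of_nonneg fun p _ => ha p).1 (hsa.trans hT) p hp, zero_mul]
        · rw [(sum_eq_zero_iff_of_nonneg fun q _ => hb q).1 (hsb.trans hT) p hp, zero_mul]

end Coupling

section Reduction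

variable {M : Type*} [PseudoMetricSpace M] [DecidableEq M]

theorem exists_flow_erase {P : Finset M} {v : M} (hv : v ∈ P) {φ : M × M → ℝ} (hφ : 0 ≤ φ)
    (hdiv : flowDiv P φ v = 0) :
    ∃ ψ, 0 ≤ ψ ∧ flowDiv (P.erase v) ψ = flowDiv P φ ∧
      flowCost (P.erase v) ψ ≤ flowCost P φ := by
  set a : M → ℝ := fun p => φ (p, v)
  set b : M → ℝ := fun q => φ (v, q)
  set T := ∑ q ∈ P.erase v, b q
  have ha : 0 ≤ a := fun p => hφ _
  have hb : 0 ≤ b := fun q => hφ _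
  have hsa : ∑ p ∈ P.erase v, a p = T := by
    have h := flowDiv_apply (φ := φ) hv
    rw [hdiv, ← add_sum_erase P _ hv, ← add_sum_erase P (fun p => φ (p, v)) hv] at h
    linarith
  refine ⟨φ + coupling a b T,
    add_nonneg hφ (coupling_nonneg ha hb (sum_nonneg fun q _ => hb q)), ?_, ?_⟩
  · ext u
    by_cases hu : u ∈ P.erase v
    · rw [flowDiv_add, Finsupp.add_apply, flowDiv_coupling_apply ha hb hsa rfl hu,
        flowDiv_erase_apply hv hu]
      ring
    · rw [flowDiv_apply_of_notMem hu]
      rcases eq_or_ne u v with rfl | huv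
      · exact hdiv.symm
      · exact (flowDiv_apply_of_notMem fun h => hu (mem_erase.2 ⟨huv, h⟩)).symm
  · rw [flowCost_add, flowCost_erase hv]
    linarith [flowCost_coupling_le ha hb hsa rfl v]

theorem exists_flow_of_support_subset {S : Finset M} {f : M →₀ ℝ} (hf : f.support ⊆ S)
    (D : Finset M) {φ : M × M → ℝ} (hφ : 0 ≤ φ) (hdiv : flowDiv (S ∪ D) φ = f) :
    ∃ ψ, 0 ≤ ψ ∧ flowDiv S ψ = f ∧ flowCost S ψ ≤ flowCost (S ∪ D) φ := by
  induction D using Finset.induction_on generalizing φ with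
  | empty => exact ⟨φ, hφ, by simpa using hdiv, by simp⟩
  | @insert v D hvD ih =>
    by_cases hvS : v ∈ S
    · rw [union_insert, insert_eq_of_mem (mem_union_left D hvS)] at hdiv ⊢
      exact ih hφ hdiv
    have hv : v ∈ S ∪ insert v D := mem_union_right S (mem_insert_self v D)
    have herase : (S ∪ insert v D).erase v = S ∪ D := by
      rw [union_insert, erase_insert (by simp [hvS, hvD])]
    obtain ⟨ψ, hψ, hdivψ, hcostψ⟩ := exists_flow_erase hv hφ
      (by rw [hdiv]; exact Finsupp.notMem_support_iff.1 fun h => hvS (hf h))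
    rw [herase] at hdivψ hcostψ
    obtain ⟨χ, hχ, hdivχ, hcostχ⟩ := ih hψ (hdivψ.trans hdiv)
    exact ⟨χ, hχ, hdivχ, hcostχ.trans hcostψ⟩

end Reduction

section Minimizer

variable {M : Type*} {S : Finset M}

theorem flowDiv_indicator_offDiag (φ : M × M → ℝ) :
    flowDiv S ((S : Set M).offDiag.indicator φ) = flowDiv S φ := by
  refine sum_congr rfl fun pq hpq => ?_
  by_cases h : pq.1 = pq.2
  · rw [h, sub_self, smul_zero, smul_zero]
  · obtain ⟨h₁, h₂⟩ := mem_product.1 hpq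
    rw [Set.indicator_of_mem (Set.mem_offDiag.2 ⟨h₁, h₂, h⟩)]

theorem flowCost_indicator_offDiag [PseudoMetricSpace M] (φ : M × M → ℝ) :
    flowCost S ((S : Set M).offDiag.indicator φ) = flowCost S φ := by
  refine sum_congr rfl fun pq hpq => ?_
  by_cases h : pq.1 = pq.2
  · rw [h, dist_self, mul_zero, mul_zero]
  · obtain ⟨h₁, h₂⟩ := mem_product.1 hpq
    rw [Set.indicator_of_mem (Set.mem_offDiag.2 ⟨h₁, h₂, h⟩)]

theorem isClosed_setOf_flowDiv_eq (S : Finset M) (f : M →₀ ℝ) :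
    IsClosed {φ : M × M → ℝ | flowDiv S φ = f} := by
  have h : {φ : M × M → ℝ | flowDiv S φ = f} = ⋂ u, {φ | flowDiv S φ u = f u} := by
    ext φ
    simp [Finsupp.ext_iff]
  rw [h]
  refine isClosed_iInter fun u => isClosed_eq ?_ continuous_const
  simp only [flowDiv, Finsupp.finsetSum_apply, Finsupp.smul_apply, smul_eq_mul]
  fun_prop

theorem continuous_flowCost [PseudoMetricSpace M] (S : Finset M) : Continuous (flowCost S) := by
  unfold flowCost
  fun_prop

theorem exists_flow_minimizer [MetricSpace M] {f : M →₀ ℝ} {φ₁ : M × M → ℝ} (hφ₁ : 0 ≤ φ₁)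
    (hdiv₁ : flowDiv S φ₁ = f) :
    ∃ φ₀, 0 ≤ φ₀ ∧ flowDiv S φ₀ = f ∧
      ∀ φ, 0 ≤ φ → flowDiv S φ = f → flowCost S φ₀ ≤ flowCost S φ := by
  set C := flowCost S φ₁
  set B : M × M → ℝ := (S : Set M).offDiag.indicator fun pq => C / dist pq.1 pq.2
  set K := Set.Icc 0 B ∩ {φ | flowDiv S φ = f}
  have hK : IsCompact K := isCompact_Icc.inter_right (isClosed_setOf_flowDiv_eq S f)
  have hmemK : ∀ φ, 0 ≤ φ → flowDiv S φ = f → flowCost S φ ≤ C →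
      (S : Set M).offDiag.indicator φ ∈ K := by
    refine fun φ hφ hdiv hC => ⟨⟨Set.indicator_nonneg fun pq _ => hφ pq, fun pq => ?_⟩,
      (flowDiv_indicator_offDiag φ).trans hdiv⟩
    by_cases hpq : pq ∈ (S : Set M).offDiag
    · obtain ⟨h₁, h₂, hne⟩ := Set.mem_offDiag.1 hpq
      simp only [B, Set.indicator_of_mem hpq]
      rw [le_div_iff₀ (dist_pos.2 hne)]
      exact (mul_dist_le_flowCost hφ (mem_product.2 ⟨h₁, h₂⟩)).trans hC
    · simp only [B, Set.indicator_of_notMem hpq, le_refl]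
  obtain ⟨φ₀, ⟨⟨hφ₀, -⟩, hdiv₀⟩, hmin⟩ := hK.exists_isMinOn ⟨_, hmemK φ₁ hφ₁ hdiv₁ le_rfl⟩
    (continuous_flowCost S).continuousOn
  have hle : ∀ φ, 0 ≤ φ → flowDiv S φ = f → flowCost S φ ≤ C → flowCost S φ₀ ≤ flowCost S φ :=
    fun φ hφ hdiv hC => flowCost_indicator_offDiag (S := S) φ ▸ hmin (hmemK φ hφ hdiv hC)
  refine ⟨φ₀, hφ₀, hdiv₀, fun φ hφ hdiv => ?_⟩
  by_cases hC : flowCost S φ ≤ C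
  · exact hle φ hφ hdiv hC
  · exact (hle φ₁ hφ₁ hdiv₁ le_rfl).trans (le_of_not_ge hC)

end Minimizer

theorem exists_flowDiv_eq {M : Type*} [DecidableEq M] {f : M →₀ ℝ}
    (hf : ∑ u ∈ f.support, f u = 0) : ∃ φ, 0 ≤ φ ∧ flowDiv f.support φ = f := by
  set T := ∑ p ∈ f.support, (f p)⁺
  have hsb : ∑ q ∈ f.support, (f q)⁻ = T := by
    have h : ∑ u ∈ f.support, ((f u)⁺ - (f u)⁻) = 0 := by simpa only [posPart_sub_negPart]
    rw [sum_sub_distrib] at h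
    linarith
  have ha : 0 ≤ fun p => (f p)⁺ := fun p => posPart_nonneg _
  have hb : 0 ≤ fun q => (f q)⁻ := fun q => negPart_nonneg _
  refine ⟨coupling (fun p => (f p)⁺) (fun q => (f q)⁻) T,
    coupling_nonneg ha hb (sum_nonneg fun p _ => ha p), ?_⟩
  ext u
  by_cases hu : u ∈ f.support
  · rw [flowDiv_coupling_apply ha hb rfl hsb hu, posPart_sub_negPart]
  · rw [flowDiv_apply_of_notMem hu, Finsupp.notMem_support_iff.1 hu]

section Plans

variable {M ι : Type*} [Fintype ι] [DecidableEq M] {a : ι → ℝ} {x y : ι → M}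

noncomputable def planFlow (a : ι → ℝ) (x y : ι → M) : M × M → ℝ :=
  fun pq => ∑ i with (x i, y i) = pq, a i

theorem planFlow_nonneg (ha : ∀ i, 0 ≤ a i) : 0 ≤ planFlow a x y :=
  fun _ => sum_nonneg fun i _ => ha i

theorem sum_planFlow_smul {V : Type*} [AddCommMonoid V] [Module ℝ V] {t : Finset (M × M)}
    (ht : ∀ i, (x i, y i) ∈ t) (F : M × M → V) :
    ∑ pq ∈ t, planFlow a x y pq • F pq = ∑ i, a i • F (x i, y i) := by
  rw [← sum_fiberwise_of_maps_to (fun i _ => ht i) (fun i => a i • F (x i, y i))]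
  refine sum_congr rfl fun pq _ => ?_
  rw [planFlow, sum_smul]
  exact sum_congr rfl fun i hi => by rw [(mem_filter.1 hi).2]

theorem exists_flow_le_planCost [PseudoMetricSpace M] {f : M →₀ ℝ} (ha : ∀ i, 0 ≤ a i)
    (hf : f = ∑ i, a i • (Finsupp.single (x i) 1 - Finsupp.single (y i) 1)) :
    ∃ ψ, 0 ≤ ψ ∧ flowDiv f.support ψ = f ∧
      flowCost f.support ψ ≤ ∑ i, a i * dist (x i) (y i) := by
  set D := univ.image x ∪ univ.image y
  have hxy : ∀ i, (x i, y i) ∈ (f.support ∪ D) ×ˢ (f.support ∪ D) := fun i =>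
    mem_product.2 ⟨mem_union_right _ (mem_union_left _ (mem_image_of_mem x (mem_univ i))),
      mem_union_right _ (mem_union_right _ (mem_image_of_mem y (mem_univ i)))⟩
  have hdiv : flowDiv (f.support ∪ D) (planFlow a x y) = f :=
    (sum_planFlow_smul hxy _).trans hf.symm
  have hcost : flowCost (f.support ∪ D) (planFlow a x y) = ∑ i, a i * dist (x i) (y i) :=
    sum_planFlow_smul hxy fun pq => dist pq.1 pq.2
  obtain ⟨ψ, hψ, hdivψ, hcostψ⟩ :=
    exists_flow_of_support_subset subset_rfl D (planFlow_nonneg ha) hdiv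
  exact ⟨ψ, hψ, hdivψ, hcostψ.trans_eq hcost⟩

omit [DecidableEq M] in
theorem exists_plan_of_flow [PseudoMetricSpace M] (P : Finset M) {φ : M × M → ℝ} (hφ : 0 ≤ φ) :
    ∃ (n : ℕ) (a : Fin n → ℝ) (x y : Fin n → M), (∀ i, 0 ≤ a i) ∧
      ∑ i, a i • (Finsupp.single (x i) 1 - Finsupp.single (y i) 1) = flowDiv P φ ∧
      ∑ i, a i * dist (x i) (y i) = flowCost P φ := by
  set e := (P ×ˢ P).equivFin.symm
  refine ⟨_, fun i => φ (e i), fun i => (e i : M × M).1, fun i => (e i : M × M).2,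
    fun i => hφ _, ?_, ?_⟩
  · exact (e.sum_comp _).trans
      (sum_coe_sort (P ×ˢ P) fun pq => φ pq • (Finsupp.single pq.1 1 - Finsupp.single pq.2 1))
  · exact (e.sum_comp _).trans (sum_coe_sort (P ×ˢ P) fun pq => φ pq * dist pq.1 pq.2)

end Plans

/-- For every finitely supported zero-sum function `f` on a metric space there is a
transportation plan solving `f` whose cost equals `tcCost f`, i.e. the infimum in the
definition of the transportation cost norm is attained. -/
theorem tcCost_attained {M : Type*} [MetricSpace M] (f : M →₀ ℝ)
    (hf : f.sum (fun _ r => r) = 0) :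
    ∃ (n : ℕ) (a : Fin n → ℝ) (x y : Fin n → M),
      (∀ i, 0 ≤ a i) ∧
      f = ∑ i, a i • (Finsupp.single (x i) 1 - Finsupp.single (y i) 1) ∧
      ∑ i, a i * dist (x i) (y i) = tcCost f := by
  classical
  obtain ⟨φ₁, hφ₁, hdiv₁⟩ := exists_flowDiv_eq hf
  obtain ⟨φ₀, hφ₀, hdiv₀, hmin⟩ := exists_flow_minimizer hφ₁ hdiv₁
  obtain ⟨n, a, x, y, ha, hdiv, hcost⟩ := exists_plan_of_flow f.support hφ₀
  have hf₀ := hdiv.trans hdiv₀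
  refine ⟨n, a, x, y, ha, hf₀.symm, ?_⟩
  rw [tcCost, eq_comm]
  refine IsLeast.csInf_eq ⟨⟨n, a, x, y, ha, hf₀.symm, rfl⟩, ?_⟩
  rintro c ⟨m, b, u, w, hb, hfb, rfl⟩
  obtain ⟨ψ, hψ, hdivψ, hcostψ⟩ := exists_flow_le_planCost hb hfb
  exact hcost ▸ (hmin ψ hψ hdivψ).trans hcostψ
end

section
/- Let (M,d) be a metric space with a distinguished base point O. Then the map v ↦ 1_v − 1_O from M into (TP(M), ||·||_TC) is an isometric embedding; that is, ||(1_u − 1_O) − (1_v − 1_O)||_TC = d(u,v) for all u,v ∈ M. -/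
/-- The canonical embedding `v ↦ 1_v − 1_O` of a metric space with base point `O`
into `(TP(M), ‖·‖_TC)` is an isometric embedding. -/
theorem canonical_embedding_isometric {M : Type*} [MetricSpace M] (O : M) (u v : M) :
    tcCost ((Finsupp.single u 1 - Finsupp.single O 1)
      - (Finsupp.single v 1 - Finsupp.single O 1)) = dist u v := by
  have hf : (Finsupp.single u 1 - Finsupp.single O 1)
      - (Finsupp.single v 1 - Finsupp.single O 1)
      = Finsupp.single u (1 : ℝ) - Finsupp.single v 1 := by abel
  rw [hf]
  set S : Set ℝ := {c : ℝ | ∃ (n : ℕ) (a : Fin n → ℝ) (x y : Fin n → M),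
    (∀ i, 0 ≤ a i) ∧
    (Finsupp.single u (1:ℝ) - Finsupp.single v 1)
      = ∑ i, a i • (Finsupp.single (x i) 1 - Finsupp.single (y i) 1) ∧
    c = ∑ i, a i * dist (x i) (y i)} with hS
  -- the linear functional pairing with z ↦ dist z v
  set L : (M →₀ ℝ) →ₗ[ℝ] ℝ := Finsupp.linearCombination ℝ (fun z => dist z v) with hL
  have key : ∀ c ∈ S, dist u v ≤ c := by
    rintro c ⟨n, a, x, y, ha, hfe, hc⟩
    have hLf : L (Finsupp.single u (1:ℝ) - Finsupp.single v 1) = dist u v := by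
      simp [hL, Finsupp.linearCombination_single, dist_self]
    have hLsum : L (∑ i, a i • (Finsupp.single (x i) 1 - Finsupp.single (y i) 1))
        = ∑ i, a i * (dist (x i) v - dist (y i) v) := by
      rw [map_sum]
      refine Finset.sum_congr rfl fun i _ => ?_
      simp [hL, Finsupp.linearCombination_single, smul_eq_mul]
    have : dist u v = ∑ i, a i * (dist (x i) v - dist (y i) v) := by
      rw [← hLf, hfe, hLsum]
    rw [this, hc]
    refine Finset.sum_le_sum fun i _ => ?_
    have h1 : dist (x i) v - dist (y i) v ≤ dist (x i) (y i) := by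
      have := abs_dist_sub_le (x i) (y i) v
      linarith [abs_le.mp this]
    exact mul_le_mul_of_nonneg_left h1 (ha i)
  have hmem : dist u v ∈ S := by
    refine ⟨1, fun _ => 1, fun _ => u, fun _ => v, fun _ => zero_le_one, ?_, ?_⟩
    · simp
    · simp
  refine le_antisymm (csInf_le ⟨dist u v, key⟩ hmem) (le_csInf ⟨_, hmem⟩ key)
end

section
/- Let (M,d) be a metric space. A transportation plan f = Σ_{i=1}^n a_i(1_{x_i} − 1_{y_i}) with a_i ≥ 0 is optimal (its cost equals ||f||_TC) if and only if there exists a 1-Lipschitz real-valued function l on M such that l(x_i) − l(y_i) = d(x_i, y_i) for every i with a_i > 0. -/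
open Finset Finsupp

namespace TransportCost

variable {M : Type*} {ι : Type*}

theorem linearCombination_plan [Fintype ι] (l : M → ℝ) (a : ι → ℝ) (x y : ι → M) :
    linearCombination ℝ l (∑ i, a i • (single (x i) 1 - single (y i) 1)) =
      ∑ i, a i * (l (x i) - l (y i)) := by
  simp [map_sum]

/-- The legs `p ⇝ x i₁`, `y i₁ ⇝ x i₂`, …, `y iₖ ⇝ q` of the chain through the edges of `L`. -/
def legs (x y : ι → M) : M → M → List ι → List (M × M)
  | p, q, [] => [(p, q)]
  | p, q, i :: L => (p, x i) :: legs x y (y i) q L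

theorem sum_legs_sub {G : Type*} [AddCommGroup G] (x y : ι → M) (φ : M → G) :
    ∀ (p q : M) (L : List ι), ((legs x y p q L).map fun e => φ e.2 - φ e.1).sum =
      (L.map fun i => φ (x i) - φ (y i)).sum + (φ q - φ p)
  | p, q, [] => by simp [legs]
  | p, q, i :: L => by
    simp only [legs, List.map_cons, List.sum_cons, sum_legs_sub x y φ (y i) q L]
    abel

theorem sum_count_nsmul [Fintype ι] [DecidableEq ι] {V : Type*} [AddCommMonoid V] (L : List ι)
    (v : ι → V) : ∑ i, L.count i • v i = (L.map v).sum := by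
  rw [Finset.sum_list_map_count]
  refine (sum_subset (subset_univ _) fun i _ hi => ?_).symm
  rw [List.count_eq_zero_of_not_mem (by simpa using hi), zero_smul]

theorem exists_pos_mul_count_le [DecidableEq ι] {a : ι → ℝ} (ha : ∀ i, 0 ≤ a i) {L : List ι}
    (hL : ∀ i ∈ L, 0 < a i) : ∃ ε > 0, ∀ i, ε * L.count i ≤ a i := by
  obtain rfl | hne := eq_or_ne L []
  · exact ⟨1, one_pos, by simpa using ha⟩
  obtain ⟨j, hj, hmin⟩ := L.toFinset.exists_min_image a (by simpa using hne)
  have hj : j ∈ L := List.mem_toFinset.1 hj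
  have hlen : (0 : ℝ) < L.length := by exact_mod_cast List.length_pos_of_mem hj
  have hε : 0 < a j / L.length := div_pos (hL j hj) hlen
  refine ⟨_, hε, fun i => ?_⟩
  by_cases hi : i ∈ L
  · calc a j / L.length * L.count i ≤ a j / L.length * L.length := by
          gcongr
          exact_mod_cast List.count_le_length
      _ = a j := div_mul_cancel₀ _ hlen.ne'
      _ ≤ a i := hmin i (List.mem_toFinset.2 hi)
  · simp [List.count_eq_zero_of_not_mem hi, ha i]

/-- The plan indexed by `ι ⊕ Fin T.length` takes `ε` off each occurrence of an edge in `L` and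
puts `ε` on each reversed leg in `T`. -/
theorem sum_reroute [Fintype ι] [DecidableEq ι] {V : Type*} [AddCommGroup V] [Module ℝ V]
    (w : M → M → V) (a : ι → ℝ) (x y : ι → M) (ε : ℝ) (L : List ι) (T : List (M × M)) :
    ∑ k : ι ⊕ Fin T.length, Sum.elim (fun i => a i - ε * L.count i) (fun _ => ε) k •
        w (Sum.elim x (fun j => T[j.1].2) k) (Sum.elim y (fun j => T[j.1].1) k) =
      ∑ i, a i • w (x i) (y i) +
        ε • ((T.map fun e => w e.2 e.1).sum - (L.map fun i => w (x i) (y i)).sum) := by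
  simp only [Fintype.sum_sum_type, Sum.elim_inl, Sum.elim_inr, sub_smul, sum_sub_distrib,
    mul_smul, Nat.cast_smul_eq_nsmul, ← Finset.smul_sum, sum_count_nsmul,
    Fin.sum_univ_fun_getElem (f := fun e : M × M => w e.2 e.1), smul_sub]
  abel

variable [MetricSpace M]

theorem tcCost_le_of_plan [Fintype ι] {f : M →₀ ℝ} (a : ι → ℝ) (x y : ι → M)
    (ha : ∀ i, 0 ≤ a i) (hf : f = ∑ i, a i • (single (x i) 1 - single (y i) 1)) :
    tcCost f ≤ ∑ i, a i * dist (x i) (y i) := by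
  let e := (Fintype.equivFin ι).symm
  refine csInf_le ⟨0, ?_⟩ ⟨Fintype.card ι, a ∘ e, x ∘ e, y ∘ e, fun _ => ha _, ?_, ?_⟩
  · rintro c ⟨n, b, u, v, hb, -, rfl⟩
    exact sum_nonneg fun j _ => mul_nonneg (hb j) dist_nonneg
  · exact hf.trans (e.sum_comp _).symm
  · exact (e.sum_comp _).symm

theorem cost_eq_tcCost_of_tight {n : ℕ} {l : M → ℝ} (hl : LipschitzWith 1 l) {a : Fin n → ℝ}
    {x y : Fin n → M} (htight : ∀ i, 0 < a i → l (x i) - l (y i) = dist (x i) (y i))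
    (ha : ∀ i, 0 ≤ a i) {f : M →₀ ℝ}
    (hf : f = ∑ i, a i • (single (x i) 1 - single (y i) 1)) :
    ∑ i, a i * dist (x i) (y i) = tcCost f := by
  have hpair : linearCombination ℝ l f = ∑ i, a i * dist (x i) (y i) := by
    rw [hf, linearCombination_plan]
    refine sum_congr rfl fun i _ => ?_
    rcases (ha i).eq_or_lt with h | h
    · simp [← h]
    · rw [htight i h]
  refine le_antisymm (le_csInf ⟨_, n, a, x, y, ha, hf, rfl⟩ ?_) (tcCost_le_of_plan a x y ha hf)
  rintro c ⟨m, b, u, v, hb, rfl, rfl⟩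
  rw [← hpair, linearCombination_plan]
  refine sum_le_sum fun j _ => mul_le_mul_of_nonneg_left ?_ (hb j)
  have h := hl.le_add_mul (u j) (v j)
  rw [NNReal.coe_one, one_mul] at h
  linarith

def chainCost (x y : ι → M) (p q : M) (L : List ι) : ℝ :=
  ((legs x y p q L).map fun e => dist e.1 e.2).sum - (L.map fun i => dist (x i) (y i)).sum

section Chains

variable (x y : ι → M)

@[simp]
theorem chainCost_nil (p q : M) : chainCost x y p q [] = dist p q := by
  simp [chainCost, legs]

@[simp]
theorem chainCost_cons (p q : M) (i : ι) (L : List ι) :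
    chainCost x y p q (i :: L) = dist p (x i) - dist (x i) (y i) + chainCost x y (y i) q L := by
  simp only [chainCost, legs, List.map_cons, List.sum_cons]
  ring

theorem chainCost_le_dist_add (p p' q : M) (L : List ι) :
    chainCost x y p q L ≤ dist p p' + chainCost x y p' q L := by
  cases L with
  | nil => simpa using dist_triangle p p' q
  | cons i L => simp only [chainCost_cons]; linarith [dist_triangle p p' (x i)]

theorem chainCost_le_chainCost_add_dist :
    ∀ (p q q' : M) (L : List ι), chainCost x y p q L ≤ chainCost x y p q' L + dist q' q
  | p, q, q', [] => by simpa using dist_triangle p q' q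
  | p, q, q', i :: L => by
    simp only [chainCost_cons]
    linarith [chainCost_le_chainCost_add_dist (y i) q q' L]

end Chains

/-- By the triangle inequality at `p`, this is cyclical monotonicity of the support of `a`. -/
def CyclicallyMonotone (a : ι → ℝ) (x y : ι → M) : Prop :=
  ∀ (p : M) (L : List ι), (∀ i ∈ L, 0 < a i) → 0 ≤ chainCost x y p p L

theorem tcCost_le_add_mul_chainCost [Fintype ι] {a : ι → ℝ} {x y : ι → M} {f : M →₀ ℝ}
    (ha : ∀ i, 0 ≤ a i) (hf : f = ∑ i, a i • (single (x i) 1 - single (y i) 1))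
    {L : List ι} (hL : ∀ i ∈ L, 0 < a i) (p : M) :
    ∃ ε > 0, tcCost f ≤ ∑ i, a i * dist (x i) (y i) + ε * chainCost x y p p L := by
  classical
  obtain ⟨ε, hε, hεa⟩ := exists_pos_mul_count_le ha hL
  set T := legs x y p p L
  refine ⟨ε, hε, ?_⟩
  have hb : ∀ k, 0 ≤ Sum.elim (fun i => a i - ε * L.count i) (fun _ : Fin T.length => ε) k := by
    rintro (i | j)
    · simpa using hεa i
    · exact hε.le
  have hvec := sum_reroute (fun u v => single u (1 : ℝ) - single v 1) a x y ε L T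
  have hcost := sum_reroute (fun u v => dist u v) a x y ε L T
  simp only [T, sum_legs_sub x y (fun z => single z (1 : ℝ)), ← hf] at hvec
  simp only [smul_eq_mul] at hcost
  calc tcCost f ≤ _ := tcCost_le_of_plan _ _ _ hb (by rw [hvec]; simp)
    _ = _ := by rw [hcost, chainCost]; simp [dist_comm, T]

theorem cyclicallyMonotone_of_optimal [Fintype ι] {a : ι → ℝ} {x y : ι → M} {f : M →₀ ℝ}
    (ha : ∀ i, 0 ≤ a i) (hf : f = ∑ i, a i • (single (x i) 1 - single (y i) 1))
    (hopt : ∑ i, a i * dist (x i) (y i) ≤ tcCost f) : CyclicallyMonotone a x y := by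
  intro p L hL
  obtain ⟨ε, hε, hle⟩ := tcCost_le_add_mul_chainCost ha hf hL p
  exact nonneg_of_mul_nonneg_right (by linarith) hε

noncomputable def chainPotential (a : ι → ℝ) (x y : ι → M) (o p : M) : ℝ :=
  ⨅ L : {L : List ι // ∀ i ∈ L, 0 < a i}, chainCost x y p o L

section Potential

variable {a : ι → ℝ} {x y : ι → M}

instance : Nonempty {L : List ι // ∀ i ∈ L, 0 < a i} := ⟨⟨[], by simp⟩⟩

theorem bddBelow_range_chainCost (hcm : CyclicallyMonotone a x y) (o p : M) :
    BddBelow (Set.range fun L : {L : List ι // ∀ i ∈ L, 0 < a i} => chainCost x y p o L) := by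
  refine ⟨-dist o p, ?_⟩
  rintro _ ⟨⟨L, hL⟩, rfl⟩
  linarith [hcm p L hL, chainCost_le_chainCost_add_dist x y p p o L]

theorem chainPotential_le (hcm : CyclicallyMonotone a x y) (o p : M) {L : List ι}
    (hL : ∀ i ∈ L, 0 < a i) : chainPotential a x y o p ≤ chainCost x y p o L :=
  ciInf_le (bddBelow_range_chainCost hcm o p) ⟨L, hL⟩

theorem le_chainPotential {o p : M} {c : ℝ}
    (h : ∀ L : List ι, (∀ i ∈ L, 0 < a i) → c ≤ chainCost x y p o L) :
    c ≤ chainPotential a x y o p :=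
  le_ciInf fun L => h L.1 L.2

theorem chainPotential_le_add_dist (hcm : CyclicallyMonotone a x y) (o p q : M) :
    chainPotential a x y o p ≤ chainPotential a x y o q + dist p q := by
  rw [← sub_le_iff_le_add]
  refine le_chainPotential fun L hL => ?_
  linarith [chainPotential_le hcm o p hL, chainCost_le_dist_add x y p q o L]

theorem chainPotential_add_dist_le (hcm : CyclicallyMonotone a x y) (o : M) {i : ι}
    (hi : 0 < a i) :
    chainPotential a x y o (x i) + dist (x i) (y i) ≤ chainPotential a x y o (y i) := by
  refine le_chainPotential fun L hL => ?_
  have := chainPotential_le hcm o (x i) (List.forall_mem_cons.2 ⟨hi, hL⟩)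
  simp only [chainCost_cons, dist_self] at this
  linarith

theorem CyclicallyMonotone.exists_lipschitz_tight (hcm : CyclicallyMonotone a x y) :
    ∃ l : M → ℝ, LipschitzWith 1 l ∧ ∀ i, 0 < a i → l (x i) - l (y i) = dist (x i) (y i) := by
  rcases isEmpty_or_nonempty M with hM | ⟨⟨o⟩⟩
  · exact ⟨0, LipschitzWith.of_le_add isEmptyElim, fun i => isEmptyElim (x i)⟩
  have hlip : LipschitzWith 1 fun p => -chainPotential a x y o p :=
    LipschitzWith.of_le_add fun p q => by
      linarith [chainPotential_le_add_dist hcm o q p, dist_comm p q]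
  refine ⟨_, hlip, fun i hi => le_antisymm ?_ ?_⟩
  · have := hlip.le_add_mul (x i) (y i)
    rw [NNReal.coe_one, one_mul] at this
    linarith
  · linarith [chainPotential_add_dist_le hcm o hi]

end Potential

end TransportCost

/-- A transportation plan `f = Σ aᵢ(1_{xᵢ} − 1_{yᵢ})`, `aᵢ ≥ 0`, is optimal (its cost
equals `tcCost f`) if and only if there is a `1`-Lipschitz function `l : M → ℝ` with
`l (xᵢ) − l (yᵢ) = d(xᵢ, yᵢ)` whenever `aᵢ > 0`. -/
theorem optimal_plan_iff_lipschitz_witness {M : Type*} [MetricSpace M]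
    (n : ℕ) (a : Fin n → ℝ) (x y : Fin n → M) (ha : ∀ i, 0 ≤ a i)
    (f : M →₀ ℝ)
    (hf : f = ∑ i, a i • (Finsupp.single (x i) 1 - Finsupp.single (y i) 1)) :
    (∑ i, a i * dist (x i) (y i) = tcCost f) ↔
      ∃ l : M → ℝ, LipschitzWith 1 l ∧
        ∀ i, 0 < a i → l (x i) - l (y i) = dist (x i) (y i) :=
  ⟨fun hopt => (TransportCost.cyclicallyMonotone_of_optimal ha hf hopt.le).exists_lipschitz_tight,
    fun ⟨_, hl, htight⟩ => TransportCost.cost_eq_tcCost_of_tight hl htight ha hf⟩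
end

section
/- Let (M,d) be a metric space with 2n elements, viewed as a weighted complete graph where the weight of edge uv is d(u,v). Let {u_i v_i : i = 1,…,n} be a perfect matching of minimum total weight. Then the transportation problems f_i = 1_{u_i} − 1_{v_i} are completely unrelated: for all real numbers a_1,…,a_n, ||Σ_{i=1}^n a_i(1_{u_i} − 1_{v_i})||_TC = Σ_{i=1}^n |a_i| d(u_i, v_i). Consequently TC(M) contains a subspace isometric to ℓ₁ⁿ. -/
open Finset

section Plans

variable {M : Type*} {m : ℕ} (b : Fin m → ℝ) (x y : Fin m → M)

theorem linearCombination_sum_smul_single_sub_single (g : M → ℝ) :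
    Finsupp.linearCombination ℝ g
        (∑ j, b j • (Finsupp.single (x j) 1 - Finsupp.single (y j) 1))
      = ∑ j, b j * (g (x j) - g (y j)) := by
  simp only [map_sum, map_smul, map_sub, Finsupp.linearCombination_single, smul_eq_mul, one_mul]

theorem sum_sum_smul_single_sub_single :
    (∑ j, b j • (Finsupp.single (x j) (1 : ℝ) - Finsupp.single (y j) 1)).sum (fun _ r => r)
      = 0 := by
  have hsum : (fun (_ : M) (r : ℝ) => r) = fun p r => r • (fun _ => (1 : ℝ)) p := by
    simp only [smul_eq_mul, mul_one]
  rw [hsum, ← Finsupp.linearCombination_apply, linearCombination_sum_smul_single_sub_single]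
  simp

end Plans

section MinMatching

variable {M : Type*} [MetricSpace M] {n : ℕ}

section Walks

variable (u v : Fin n → M)

/-- `altWalkCost u v y [i₁, …, iₖ] x` is the length of the walk
`y → u i₁ ⇝ v i₁ → u i₂ ⇝ ⋯ ⇝ v iₖ → x`, where each matching edge `u i ⇝ v i` is
traversed at cost `-dist (u i) (v i)`. -/
noncomputable def altWalkCost : M → List (Fin n) → M → ℝ
  | y, [], x => dist y x
  | y, i :: c, x => dist y (u i) - dist (u i) (v i) + altWalkCost (v i) c x

theorem neg_sum_le_altWalkCost :
    ∀ (y : M) (c : List (Fin n)) (x : M),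
      -(c.map fun i => dist (u i) (v i)).sum ≤ altWalkCost u v y c x
  | y, [], x => by simp [altWalkCost]
  | y, i :: c, x => by
    have := neg_sum_le_altWalkCost (v i) c x
    simp only [altWalkCost, List.map_cons, List.sum_cons]
    linarith [dist_nonneg (x := y) (y := u i)]

theorem neg_sum_univ_le_altWalkCost {c : List (Fin n)} (hc : c.Nodup) (y x : M) :
    -∑ i, dist (u i) (v i) ≤ altWalkCost u v y c x := by
  classical
  have : (c.map fun i => dist (u i) (v i)).sum ≤ ∑ i, dist (u i) (v i) := by
    rw [← List.sum_toFinset _ hc]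
    exact sum_le_sum_of_subset_of_nonneg (subset_univ _) fun i _ _ => dist_nonneg
  linarith [neg_sum_le_altWalkCost u v y c x]

theorem altWalkCost_le_add_dist :
    ∀ (y : M) (c : List (Fin n)) (z x : M),
      altWalkCost u v y c x ≤ altWalkCost u v y c z + dist z x
  | y, [], z, x => dist_triangle y z x
  | y, i :: c, z, x => by
    have := altWalkCost_le_add_dist (v i) c z x
    simp only [altWalkCost]
    linarith

theorem altWalkCost_append_cons (i : Fin n) (c₂ : List (Fin n)) :
    ∀ (y : M) (c₁ : List (Fin n)) (x : M),
      altWalkCost u v y (c₁ ++ i :: c₂) x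
        = altWalkCost u v y c₁ (u i) - dist (u i) (v i) + altWalkCost u v (v i) c₂ x
  | y, [], x => by simp [altWalkCost]
  | y, j :: c₁, x => by
    simp only [List.cons_append, altWalkCost, altWalkCost_append_cons i c₂ (v j) c₁ x]
    ring

/-- The default `z` of `nextOr` makes the last non-matching edge end at `u z`. -/
theorem sum_dist_nextOr_eq [DecidableEq (Fin n)] :
    ∀ (a : Fin n) (c : List (Fin n)) (z : Fin n), (a :: c).Nodup →
      ((a :: c).map fun i => dist (v i) (u ((a :: c).nextOr i z))).sum
        = altWalkCost u v (v a) c (u z) + (c.map fun i => dist (u i) (v i)).sum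
  | a, [], z, _ => by simp [altWalkCost]
  | a, b :: c, z, h => by
    have ha : a ∉ b :: c := (List.nodup_cons.mp h).1
    have htail : ((b :: c).map fun i => dist (v i) (u ((a :: b :: c).nextOr i z))).sum
        = ((b :: c).map fun i => dist (v i) (u ((b :: c).nextOr i z))).sum :=
      congrArg _ <| List.map_congr_left fun i hi => by
        rw [List.nextOr_cons_of_ne _ _ _ _ (by rintro rfl; exact ha hi)]
    have IH := sum_dist_nextOr_eq b c z (List.nodup_cons.mp h).2
    simp only [List.map_cons, List.sum_cons] at htail IH ⊢
    rw [List.nextOr_self_cons_cons, htail, IH]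
    simp only [altWalkCost]
    ring

end Walks

def IsMinMatching (u v : Fin n → M) : Prop :=
  Function.Bijective (Sum.elim u v) ∧
    ∀ u' v' : Fin n → M, Function.Bijective (Sum.elim u' v') →
      ∑ i, dist (u i) (v i) ≤ ∑ i, dist (u' i) (v' i)

namespace IsMinMatching

variable {u v : Fin n → M}

theorem dist_pos (h : IsMinMatching u v) (i : Fin n) : 0 < dist (u i) (v i) :=
  _root_.dist_pos.mpr fun huv => Sum.inl_ne_inr (h.1.injective (a₁ := .inl i) (a₂ := .inr i) huv)

theorem swap (h : IsMinMatching u v) (p : Fin n → Prop) [DecidablePred p] :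
    IsMinMatching (fun i => if p i then v i else u i) (fun i => if p i then u i else v i) := by
  set σ : Fin n ⊕ Fin n → Fin n ⊕ Fin n :=
    Sum.elim (fun i => if p i then .inr i else .inl i) (fun i => if p i then .inl i else .inr i)
  have hσ : Function.Involutive σ := by
    rintro (i | i) <;> by_cases hi : p i <;> simp [σ, hi]
  have hcomp : Sum.elim (fun i => if p i then v i else u i) (fun i => if p i then u i else v i)
      = Sum.elim u v ∘ σ := by
    ext (i | i) <;> by_cases hi : p i <;> simp [σ, hi]
  have hsum : ∑ i, dist (if p i then v i else u i) (if p i then u i else v i)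
      = ∑ i, dist (u i) (v i) :=
    sum_congr rfl fun i _ => by split_ifs <;> simp [dist_comm]
  exact ⟨hcomp ▸ h.1.comp hσ.bijective, hsum ▸ h.2⟩

theorem sum_dist_le_sum_dist_perm (h : IsMinMatching u v) (σ : Equiv.Perm (Fin n)) :
    ∑ i, dist (u i) (v i) ≤ ∑ i, dist (u (σ i)) (v i) :=
  h.2 (u ∘ σ) v <| by
    rw [← Function.comp_id v, ← Sum.elim_comp_map]
    exact h.1.comp (Equiv.sumCongr σ (Equiv.refl _)).bijective

/-- Rerouting the matching along an alternating cycle cannot make it lighter. -/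
theorem dist_le_altWalkCost (h : IsMinMatching u v) {a : Fin n} {c : List (Fin n)}
    (hc : (a :: c).Nodup) : dist (u a) (v a) ≤ altWalkCost u v (v a) c (u a) := by
  classical
  set L := a :: c
  have hoff : ∀ i ∈ univ, i ∉ L.toFinset →
      dist (u (L.formPerm i)) (v i) - dist (u i) (v i) = 0 := fun i _ hi => by
    rw [List.formPerm_apply_of_notMem (by simpa using hi), sub_self]
  have hdiff := sum_subset (subset_univ L.toFinset) hoff
  rw [sum_sub_distrib, sum_sub_distrib, List.sum_toFinset _ hc, List.sum_toFinset _ hc] at hdiff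
  have hcycle : (L.map fun i => dist (u (L.formPerm i)) (v i)).sum
      = (L.map fun i => dist (v i) (u (L.nextOr i a))).sum :=
    congrArg _ <| List.map_congr_left fun i hi => by
      rw [List.formPerm_apply_mem_eq_next hc i hi, dist_comm]; rfl
  have := h.sum_dist_le_sum_dist_perm L.formPerm
  rw [hcycle, sum_dist_nextOr_eq u v a c a hc] at hdiff
  simp only [L, List.map_cons, List.sum_cons] at hdiff
  linarith

end IsMinMatching

section Potential

variable (u v : Fin n → M)

/-- The shortest-path potential of the alternating walks: it is finite because walks
along distinct matching edges earn at most `∑ i, dist (u i) (v i)`. -/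
noncomputable def matchingPotential (x : M) : ℝ :=
  ⨅ p : M × {c : List (Fin n) // c.Nodup}, altWalkCost u v p.1 p.2 x

theorem bddBelow_range_altWalkCost (x : M) :
    BddBelow
      (Set.range fun p : M × {c : List (Fin n) // c.Nodup} => altWalkCost u v p.1 p.2 x) :=
  ⟨-∑ i, dist (u i) (v i), by
    rintro _ ⟨⟨y, c, hc⟩, rfl⟩
    exact neg_sum_univ_le_altWalkCost u v hc y x⟩

theorem matchingPotential_le_altWalkCost (y : M) {c : List (Fin n)} (hc : c.Nodup) (x : M) :
    matchingPotential u v x ≤ altWalkCost u v y c x :=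
  ciInf_le (bddBelow_range_altWalkCost u v x) (y, ⟨c, hc⟩)

theorem matchingPotential_le_add_dist (x z : M) :
    matchingPotential u v x ≤ matchingPotential u v z + dist x z := by
  have : Nonempty (M × {c : List (Fin n) // c.Nodup}) := ⟨(x, ⟨[], List.nodup_nil⟩)⟩
  rw [← sub_le_iff_le_add, dist_comm]
  refine le_ciInf fun ⟨y, c, hc⟩ => sub_le_iff_le_add.mpr ?_
  exact (matchingPotential_le_altWalkCost u v y hc x).trans (altWalkCost_le_add_dist u v y c z x)

variable {u v} in
/-- A walk to `u i` is at least as long as one that ends by the matching edge `u i ⇝ v i`,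
because any earlier visit of that edge closes an alternating cycle. -/
theorem IsMinMatching.matchingPotential_add_dist_le (h : IsMinMatching u v) (i : Fin n) :
    matchingPotential u v (v i) + dist (u i) (v i) ≤ matchingPotential u v (u i) := by
  have : Nonempty (M × {c : List (Fin n) // c.Nodup}) := ⟨(u i, ⟨[], List.nodup_nil⟩)⟩
  refine le_ciInf fun ⟨y, c, hc⟩ => ?_
  obtain ⟨c', hc', hle⟩ : ∃ c' : List (Fin n), (c' ++ [i]).Nodup ∧
      altWalkCost u v y c' (u i) ≤ altWalkCost u v y c (u i) := by
    by_cases hic : i ∈ c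
    · obtain ⟨c₁, c₂, rfl⟩ := List.append_of_mem hic
      refine ⟨c₁, hc.sublist (((List.nil_sublist c₂).cons_cons i).append_left c₁), ?_⟩
      have := h.dist_le_altWalkCost (hc.sublist (List.sublist_append_right c₁ _))
      rw [altWalkCost_append_cons]
      linarith
    · exact ⟨c, List.concat_eq_append ▸ hc.concat hic, le_rfl⟩
  have := matchingPotential_le_altWalkCost u v y hc' (v i)
  simp only [altWalkCost_append_cons, altWalkCost, dist_self, add_zero] at this
  linarith

end Potential

theorem IsMinMatching.exists_potential {u v : Fin n → M} (h : IsMinMatching u v) :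
    ∃ g : M → ℝ, (∀ x y, g x - g y ≤ dist x y) ∧ ∀ i, g (u i) - g (v i) = dist (u i) (v i) :=
  ⟨matchingPotential u v, fun x y => by linarith [matchingPotential_le_add_dist u v x y],
    fun i => le_antisymm (by linarith [matchingPotential_le_add_dist u v (u i) (v i)])
      (by linarith [h.matchingPotential_add_dist_le i])⟩

/-- Kantorovich duality, easy direction: a 1-Lipschitz function that is tight on every
edge of a transportation plan certifies that the plan is optimal. -/
theorem tcCost_eq_of_potential {m : ℕ} {b : Fin m → ℝ} {x y : Fin m → M} (hb : ∀ j, 0 ≤ b j)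
    (g : M → ℝ) (hg : ∀ p q, g p - g q ≤ dist p q)
    (htight : ∀ j, g (x j) - g (y j) = dist (x j) (y j)) :
    tcCost (∑ j, b j • (Finsupp.single (x j) 1 - Finsupp.single (y j) 1))
      = ∑ j, b j * dist (x j) (y j) := by
  refine le_antisymm (csInf_le ⟨0, ?_⟩ ⟨m, b, x, y, hb, rfl, rfl⟩)
    (le_csInf ⟨_, m, b, x, y, hb, rfl, rfl⟩ ?_)
  · rintro _ ⟨m', b', x', y', hb', -, rfl⟩
    exact sum_nonneg fun j _ => mul_nonneg (hb' j) dist_nonneg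
  · rintro _ ⟨m', b', x', y', hb', hf, rfl⟩
    have hpair := congrArg (Finsupp.linearCombination ℝ g) hf
    simp only [linearCombination_sum_smul_single_sub_single, htight] at hpair
    exact hpair ▸ sum_le_sum fun j _ => mul_le_mul_of_nonneg_left (hg _ _) (hb' j)

theorem IsMinMatching.tcCost_sum_smul {u v : Fin n → M} (h : IsMinMatching u v) (a : Fin n → ℝ) :
    tcCost (∑ i, a i • (Finsupp.single (u i) 1 - Finsupp.single (v i) 1))
      = ∑ i, |a i| * dist (u i) (v i) := by
  classical
  set U := fun i => if a i < 0 then v i else u i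
  set V := fun i => if a i < 0 then u i else v i
  obtain ⟨g, hg, htight⟩ := (h.swap fun i => a i < 0).exists_potential
  have hterm : ∀ i, a i • (Finsupp.single (u i) 1 - Finsupp.single (v i) 1 : M →₀ ℝ)
      = |a i| • (Finsupp.single (U i) 1 - Finsupp.single (V i) 1) := fun i => by
    by_cases hi : a i < 0
    · simp only [U, V, hi, if_true, abs_of_neg hi, neg_smul, ← smul_neg, neg_sub]
    · simp only [U, V, hi, if_false, abs_of_nonneg (not_lt.mp hi)]
  have hdist : ∀ i, dist (U i) (V i) = dist (u i) (v i) := fun i => by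
    by_cases hi : a i < 0 <;> simp [U, V, hi, dist_comm]
  simp_rw [hterm, ← hdist]
  exact tcCost_eq_of_potential (fun i => abs_nonneg _) g hg htight

end MinMatching

theorem min_matching_gives_ell1_general {M : Type*} [MetricSpace M]
    (n : ℕ) (u v : Fin n → M) (hmatch : Function.Bijective (Sum.elim u v))
    (hmin : ∀ u' v' : Fin n → M, Function.Bijective (Sum.elim u' v') →
      ∑ i, dist (u i) (v i) ≤ ∑ i, dist (u' i) (v' i)) :
    (∀ a : Fin n → ℝ,
        tcCost (∑ i, a i • (Finsupp.single (u i) 1 - Finsupp.single (v i) 1))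
          = ∑ i, |a i| * dist (u i) (v i)) ∧
    ∃ T : (Fin n → ℝ) →ₗ[ℝ] (M →₀ ℝ),
      (∀ a, (T a).sum (fun _ r => r) = 0) ∧
      ∀ a, tcCost (T a) = ∑ i, |a i| := by
  have h : IsMinMatching u v := ⟨hmatch, hmin⟩
  let T := Fintype.linearCombination ℝ fun i =>
    (dist (u i) (v i))⁻¹ • (Finsupp.single (u i) (1 : ℝ) - Finsupp.single (v i) 1)
  have hT : ∀ a, T a = ∑ i, (a i * (dist (u i) (v i))⁻¹) •
      (Finsupp.single (u i) 1 - Finsupp.single (v i) 1) := fun a => by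
    simp only [T, Fintype.linearCombination_apply, smul_smul]
  refine ⟨h.tcCost_sum_smul, T, fun a => hT a ▸ sum_sum_smul_single_sub_single _ u v, fun a => ?_⟩
  rw [hT, h.tcCost_sum_smul]
  refine sum_congr rfl fun i _ => ?_
  rw [abs_mul, abs_inv, abs_of_pos (h.dist_pos i), inv_mul_cancel_right₀ (h.dist_pos i).ne']

/-- If `M` has `2n` elements and `{uᵢvᵢ}` is a minimum weight perfect matching of the
complete graph on `M` (weights given by the metric), then the transportation problems
`fᵢ = 1_{uᵢ} − 1_{vᵢ}` are completely unrelated: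
`‖Σ aᵢ fᵢ‖_TC = Σ |aᵢ| d(uᵢ,vᵢ)` for all reals `aᵢ`. Consequently `TC(M)` contains a
subspace isometric to `ℓ₁ⁿ`. -/
theorem min_matching_gives_ell1 {M : Type*} [MetricSpace M] [Fintype M]
    (n : ℕ) (hcard : Fintype.card M = 2 * n)
    (u v : Fin n → M) (hmatch : Function.Bijective (Sum.elim u v))
    (hmin : ∀ u' v' : Fin n → M, Function.Bijective (Sum.elim u' v') →
      ∑ i, dist (u i) (v i) ≤ ∑ i, dist (u' i) (v' i)) :
    (∀ a : Fin n → ℝ,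
        tcCost (∑ i, a i • (Finsupp.single (u i) 1 - Finsupp.single (v i) 1))
          = ∑ i, |a i| * dist (u i) (v i)) ∧
    ∃ T : (Fin n → ℝ) →ₗ[ℝ] (M →₀ ℝ),
      (∀ a, (T a).sum (fun _ r => r) = 0) ∧
      ∀ a, tcCost (T a) = ∑ i, |a i| :=
  min_matching_gives_ell1_general n u v hmatch hmin
end

section
/- Let (M,d) be a finite metric space in which all triangle inequalities for triples of distinct points are strict (d(x,z) < d(x,y) + d(y,z) whenever x,y,z are pairwise distinct). If f₁,…,f_k ∈ TP(M) are nonzero and completely unrelated, then the supports of f₁,…,f_k are pairwise disjoint. -/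
section TC
variable {M : Type*} [MetricSpace M] [Fintype M]

open Finset

set_option linter.unusedSectionVars false
set_option maxHeartbeats 1000000
attribute [local instance] Classical.propDecidable

/-- The elementary transportation problem: one unit from `u` to `w`. -/
noncomputable def EE (u w : M) : M →₀ ℝ := Finsupp.single u 1 - Finsupp.single w 1

/-- The problem solved by a transportation matrix `W`. -/
noncomputable def msolve (W : M → M → ℝ) : M →₀ ℝ := ∑ u, ∑ w, W u w • EE u w

/-- The cost of a transportation matrix. -/
noncomputable def mcost (W : M → M → ℝ) : ℝ := ∑ u, ∑ w, W u w * dist u w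

def tcSet (f : M →₀ ℝ) : Set ℝ := {c : ℝ | ∃ (n : ℕ) (a : Fin n → ℝ) (x y : Fin n → M),
    (∀ i, 0 ≤ a i) ∧
    f = ∑ i, a i • (Finsupp.single (x i) 1 - Finsupp.single (y i) 1) ∧
    c = ∑ i, a i * dist (x i) (y i)}

lemma tcCost_eq (f : M →₀ ℝ) : tcCost f = sInf (tcSet f) := rfl

lemma tcSet_nonneg (f : M →₀ ℝ) {c : ℝ} (hc : c ∈ tcSet f) : 0 ≤ c := by
  obtain ⟨n, a, x, y, ha, -, rfl⟩ := hc
  exact Finset.sum_nonneg fun i _ => mul_nonneg (ha i) dist_nonneg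

lemma tcSet_bddBelow (f : M →₀ ℝ) : BddBelow (tcSet f) :=
  ⟨0, fun c hc => tcSet_nonneg f hc⟩

lemma mcost_mem_tcSet {W : M → M → ℝ} (hW : ∀ u w, 0 ≤ W u w) :
    mcost W ∈ tcSet (msolve W) := by
  classical
  set e := (Fintype.equivFin (M × M)).symm with he
  refine ⟨Fintype.card (M × M), fun t => W (e t).1 (e t).2, fun t => (e t).1, fun t => (e t).2,
    fun t => hW _ _, ?_, ?_⟩
  · show msolve W = ∑ i, W (e i).1 (e i).2 • EE (e i).1 (e i).2
    rw [Equiv.sum_comp e (fun p : M × M => W p.1 p.2 • EE p.1 p.2)]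
    rw [Fintype.sum_prod_type]; rfl
  · show mcost W = ∑ i, W (e i).1 (e i).2 * dist (e i).1 (e i).2
    rw [Equiv.sum_comp e (fun p : M × M => W p.1 p.2 * dist p.1 p.2)]
    rw [Fintype.sum_prod_type]; rfl

lemma tcCost_le_mcost {W : M → M → ℝ} (hW : ∀ u w, 0 ≤ W u w) :
    tcCost (msolve W) ≤ mcost W :=
  csInf_le (tcSet_bddBelow _) (mcost_mem_tcSet hW)

lemma key_sum {n : ℕ} (a : Fin n → ℝ) (x y : Fin n → M) {V : Type*}
    [AddCommMonoid V] [Module ℝ V] (G : M → M → V) :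
    ∑ u : M, ∑ w : M, (∑ t, if x t = u ∧ y t = w then a t else 0) • G u w
      = ∑ t, a t • G (x t) (y t) := by
  have h1 : ∀ u w, (∑ t, if x t = u ∧ y t = w then a t else 0) • G u w
      = ∑ t, if x t = u ∧ y t = w then a t • G u w else 0 := by
    intro u w; rw [Finset.sum_smul]; congr 1; funext t; split <;> simp
  simp_rw [h1]
  rw [Finset.sum_congr rfl fun u _ => Finset.sum_comm, Finset.sum_comm]
  refine Finset.sum_congr rfl fun t _ => ?_
  simp [ite_and, Finset.sum_ite_eq]

lemma plan_to_mat {f : M →₀ ℝ} {c : ℝ} (hc : c ∈ tcSet f) :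
    ∃ W : M → M → ℝ, (∀ u w, 0 ≤ W u w) ∧ msolve W = f ∧ mcost W = c := by
  obtain ⟨n, a, x, y, ha, hsol, hcost⟩ := hc
  refine ⟨fun u w => ∑ t, if x t = u ∧ y t = w then a t else 0,
    fun u w => Finset.sum_nonneg fun t _ => by split <;> [exact ha t; exact le_rfl], ?_, ?_⟩
  · rw [msolve]
    rw [key_sum a x y EE]
    rw [hsol]; rfl
  · rw [mcost]
    have := key_sum a x y (fun u w => dist u w) (V := ℝ)
    simp only [smul_eq_mul] at this
    rw [this, hcost]

lemma msolve_apply (W : M → M → ℝ) (v : M) :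
    msolve W v = (∑ w, W v w) - (∑ u, W u v) := by
  simp only [msolve, EE, Finsupp.finset_sum_apply, Finsupp.smul_apply, Finsupp.sub_apply,
    Finsupp.single_apply, smul_eq_mul, mul_sub]
  simp [Finset.sum_sub_distrib, mul_ite, mul_one, mul_zero, Finset.sum_ite_eq, Finset.sum_ite_eq']

lemma exists_mat (f : M →₀ ℝ) (hf : ∑ u, f u = 0) (v0 : M) :
    ∃ W : M → M → ℝ, (∀ u w, 0 ≤ W u w) ∧ msolve W = f := by
  refine ⟨fun u w => (if w = v0 then max (f u) 0 else 0) + (if u = v0 then max (-(f w)) 0 else 0),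
    fun u w => by positivity, ?_⟩
  have h1 : msolve (fun u w => (if w = v0 then max (f u) 0 else 0) + (if u = v0 then max (-(f w)) 0 else 0))
      = ∑ u : M, (max (f u) 0 • EE u v0 + max (-(f u)) 0 • EE v0 u) := by
    simp only [msolve, add_smul, Finset.sum_add_distrib, ite_smul, zero_smul]
    congr 1
    · exact Finset.sum_congr rfl fun u _ => by rw [Finset.sum_ite_eq' univ v0 (fun w => max (f u) 0 • EE u w)]; simp
    · rw [Finset.sum_comm]
      exact Finset.sum_congr rfl fun w _ => by rw [Finset.sum_ite_eq' univ v0 (fun u => max (-(f w)) 0 • EE u w)]; simp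
  rw [h1]
  have h2 : ∀ u : M, max (f u) 0 • EE u v0 + max (-(f u)) 0 • EE v0 u = f u • EE u v0 := by
    intro u
    have : EE v0 u = -EE u v0 := by simp [EE]
    rw [this, smul_neg, ← sub_eq_add_neg, ← sub_smul]
    congr 1
    rcases le_total (f u) 0 with h | h
    · rw [max_eq_right h, max_eq_left (by linarith)]; ring
    · rw [max_eq_left h, max_eq_right (by linarith)]; ring
  rw [Finset.sum_congr rfl fun u _ => h2 u]
  have h3 : ∑ u : M, f u • EE u v0 = (∑ u : M, f u • (Finsupp.single u 1 : M →₀ ℝ)) - (∑ u : M, f u) • (Finsupp.single v0 1 : M →₀ ℝ) := by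
    simp [EE, smul_sub, Finset.sum_sub_distrib, Finset.sum_smul]
  rw [h3, hf, zero_smul, sub_zero]
  ext a
  simp [Finsupp.finset_sum_apply, Finsupp.single_apply, mul_ite, Finset.sum_ite_eq]

lemma tcSet_nonempty (f : M →₀ ℝ) (hf : ∑ u, f u = 0) (v0 : M) :
    (tcSet f).Nonempty := by
  obtain ⟨W, hW, hsol⟩ := exists_mat f hf v0
  exact ⟨mcost W, hsol ▸ mcost_mem_tcSet hW⟩

lemma tcCost_zero : tcCost (0 : M →₀ ℝ) = 0 := by
  have h0 : (0:ℝ) ∈ tcSet (0 : M →₀ ℝ) := ⟨0, 1, fun t => t.elim0, fun t => t.elim0, by simp, by simp, by simp⟩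
  exact le_antisymm (csInf_le (tcSet_bddBelow _) h0)
    (le_csInf ⟨0, h0⟩ fun c hc => tcSet_nonneg _ hc)

/-- outflow from `v`, excluding the loop -/
noncomputable def outf (v : M) (W : M → M → ℝ) : ℝ := ∑ w ∈ Finset.univ.erase v, W v w
noncomputable def innf (v : M) (W : M → M → ℝ) : ℝ := ∑ u ∈ Finset.univ.erase v, W u v

lemma msolve_apply' (W : M → M → ℝ) (v : M) :
    msolve W v = outf v W - innf v W := by
  rw [msolve_apply]
  rw [outf, innf]
  rw [← Finset.add_sum_erase _ _ (Finset.mem_univ v), ← Finset.add_sum_erase _ _ (Finset.mem_univ v)]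
  ring

noncomputable def meas (v : M) (W : M → M → ℝ) : ℕ :=
  ((Finset.univ.erase v).filter (fun w => W v w ≠ 0)).card +
  ((Finset.univ.erase v).filter (fun u => W u v ≠ 0)).card

lemma msolve_add (A B : M → M → ℝ) :
    msolve (fun p q => A p q + B p q) = msolve A + msolve B := by
  simp [msolve, add_smul, Finset.sum_add_distrib]

lemma msolve_sub (A B : M → M → ℝ) :
    msolve (fun p q => A p q - B p q) = msolve A - msolve B := by
  simp [msolve, sub_smul, Finset.sum_sub_distrib]

lemma msolve_ite (a b : M) (m : ℝ) :
    msolve (fun p q => if p = a ∧ q = b then m else 0) = m • EE a b := by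
  simp [msolve, ite_smul, zero_smul, ite_and, Finset.sum_ite_eq', Finset.sum_ite_eq]

lemma mcost_add (A B : M → M → ℝ) :
    mcost (fun p q => A p q + B p q) = mcost A + mcost B := by
  simp [mcost, add_mul, Finset.sum_add_distrib]

lemma mcost_sub (A B : M → M → ℝ) :
    mcost (fun p q => A p q - B p q) = mcost A - mcost B := by
  simp [mcost, sub_mul, Finset.sum_sub_distrib]

lemma mcost_ite (a b : M) (m : ℝ) :
    mcost (fun p q => if p = a ∧ q = b then m else 0) = m * dist a b := by
  simp [mcost, ite_mul, zero_mul, ite_and, Finset.sum_ite_eq', Finset.sum_ite_eq]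

lemma reroute (v : M) (δ : ℝ) (hδ0 : 0 ≤ δ)
    (hδ : ∀ u w : M, u ≠ v → w ≠ v → δ ≤ dist u v + dist v w - dist u w) :
    ∀ n : ℕ, ∀ W : M → M → ℝ, (∀ p q, 0 ≤ W p q) → meas v W ≤ n →
      ∀ c : ℝ, 0 ≤ c → c ≤ outf v W → c ≤ innf v W →
      tcCost (msolve W) + δ * c ≤ mcost W := by
  intro n
  induction n with
  | zero =>
    intro W hW hm c hc0 hco hci
    unfold meas at hm
    have h1 : ((Finset.univ.erase v).filter (fun w => W v w ≠ 0)).card = 0 := by omega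
    rw [Finset.card_eq_zero] at h1
    have hout : outf v W = 0 := by
      apply Finset.sum_eq_zero
      intro w hw
      by_contra h
      have hmem : w ∈ (Finset.univ.erase v).filter (fun w => W v w ≠ 0) :=
        Finset.mem_filter.mpr ⟨hw, h⟩
      rw [h1] at hmem
      exact absurd hmem (Finset.notMem_empty w)
    have hc : c = 0 := le_antisymm (hco.trans hout.le) hc0
    rw [hc, mul_zero, add_zero]; exact tcCost_le_mcost hW
  | succ n ih =>
    intro W hW hm c hc0 hco hci
    rcases eq_or_lt_of_le hc0 with hc | hc
    · rw [← hc, mul_zero, add_zero]; exact tcCost_le_mcost hW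
    obtain ⟨w, hwmem, hWvw⟩ : ∃ w ∈ Finset.univ.erase v, 0 < W v w := by
      by_contra h; push_neg at h
      have : outf v W ≤ 0 := Finset.sum_nonpos fun w hw => h w hw
      linarith
    obtain ⟨u, humem, hWuv⟩ : ∃ u ∈ Finset.univ.erase v, 0 < W u v := by
      by_contra h; push_neg at h
      have : innf v W ≤ 0 := Finset.sum_nonpos fun u hu => h u hu
      linarith
    have hu : u ≠ v := (Finset.mem_erase.mp humem).1
    have hw : w ≠ v := (Finset.mem_erase.mp hwmem).1
    set m := min (W u v) (W v w) with hmdef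
    have hm0 : 0 < m := lt_min hWuv hWvw
    have hmuv : m ≤ W u v := min_le_left _ _
    have hmvw : m ≤ W v w := min_le_right _ _
    set W' : M → M → ℝ := fun p q => W p q - (if p = u ∧ q = v then m else 0)
      - (if p = v ∧ q = w then m else 0) + (if p = u ∧ q = w then m else 0) with hW'def
    -- nonnegativity of W'
    have hW' : ∀ r s, 0 ≤ W' r s := by
      intro r s
      have hWrs := hW r s
      show (0:ℝ) ≤ ((W r s - if r = u ∧ s = v then m else 0)
        - if r = v ∧ s = w then m else 0) + (if r = u ∧ s = w then m else 0)
      by_cases h1 : r = u ∧ s = v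
      · rw [if_pos h1, if_neg (show ¬(r = v ∧ s = w) from fun h => hu (h1.1.symm.trans h.1)),
          if_neg (show ¬(r = u ∧ s = w) from fun h => hw (h.2.symm.trans h1.2))]
        rw [h1.1, h1.2]
        linarith
      · by_cases h2 : r = v ∧ s = w
        · rw [if_neg h1, if_pos h2,
            if_neg (show ¬(r = u ∧ s = w) from fun h => hu (h.1.symm.trans h2.1))]
          rw [h2.1, h2.2]
          linarith
        · by_cases h3 : r = u ∧ s = w
          · rw [if_neg h1, if_neg h2, if_pos h3]; linarith
          · rw [if_neg h1, if_neg h2, if_neg h3]; linarith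
    -- msolve is unchanged
    have hsol : msolve W' = msolve W := by
      have : W' = fun p q => ((W p q - (if p = u ∧ q = v then m else 0))
          - (if p = v ∧ q = w then m else 0)) + (if p = u ∧ q = w then m else 0) := by
        funext p q; rw [hW'def]
      rw [this, msolve_add, msolve_sub, msolve_sub, msolve_ite, msolve_ite, msolve_ite]
      have hEE : (EE u v : M →₀ ℝ) + EE v w = EE u w := by
        show (Finsupp.single u 1 - Finsupp.single v 1) + (Finsupp.single v 1 - Finsupp.single w 1)
          = Finsupp.single u 1 - Finsupp.single w 1
        abel
      rw [← hEE]; rw [smul_add]; abel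
    -- cost decomposition
    have hcost : mcost W' = mcost W - m * dist u v - m * dist v w + m * dist u w := by
      have : W' = fun p q => ((W p q - (if p = u ∧ q = v then m else 0))
          - (if p = v ∧ q = w then m else 0)) + (if p = u ∧ q = w then m else 0) := by
        funext p q; rw [hW'def]
      rw [this, mcost_add, mcost_sub, mcost_sub, mcost_ite, mcost_ite, mcost_ite]
    -- row of v
    have hrow : ∀ q, W' v q = W v q - if q = w then m else 0 := by
      intro q
      show ((W v q - if v = u ∧ q = v then m else 0)
        - if v = v ∧ q = w then m else 0) + (if v = u ∧ q = w then m else 0)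
        = W v q - if q = w then m else 0
      rw [if_neg (show ¬(v = u ∧ q = v) from fun h => hu h.1.symm),
        if_neg (show ¬(v = u ∧ q = w) from fun h => hu h.1.symm)]
      by_cases h2 : q = w
      · rw [if_pos (show v = v ∧ q = w from ⟨rfl, h2⟩), if_pos h2]; ring
      · rw [if_neg (show ¬(v = v ∧ q = w) from fun h => h2 h.2), if_neg h2]; ring
    have hcol : ∀ p, W' p v = W p v - if p = u then m else 0 := by
      intro p
      show ((W p v - if p = u ∧ v = v then m else 0)
        - if p = v ∧ v = w then m else 0) + (if p = u ∧ v = w then m else 0)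
        = W p v - if p = u then m else 0
      rw [if_neg (show ¬(p = v ∧ v = w) from fun h => hw h.2.symm),
        if_neg (show ¬(p = u ∧ v = w) from fun h => hw h.2.symm)]
      by_cases h1 : p = u
      · rw [if_pos (show p = u ∧ v = v from ⟨h1, rfl⟩), if_pos h1]; ring
      · rw [if_neg (show ¬(p = u ∧ v = v) from fun h => h1 h.1), if_neg h1]; ring
    have houtm : m ≤ outf v W :=
      le_trans hmvw (Finset.single_le_sum (fun q hq => hW v q) hwmem)
    have hinnm : m ≤ innf v W :=
      le_trans hmuv (Finset.single_le_sum (fun p hp => hW p v) humem)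
    have hout' : outf v W' = outf v W - m := by
      rw [outf, outf, Finset.sum_congr rfl fun q _ => hrow q, Finset.sum_sub_distrib]
      rw [Finset.sum_ite_eq' (Finset.univ.erase v) w (fun _ => m), if_pos hwmem]
    have hinn' : innf v W' = innf v W - m := by
      rw [innf, innf, Finset.sum_congr rfl fun p _ => hcol p, Finset.sum_sub_distrib]
      rw [Finset.sum_ite_eq' (Finset.univ.erase v) u (fun _ => m), if_pos humem]
    -- measure decreases
    have hmeas : meas v W' < meas v W := by
      have hsub1 : ((Finset.univ.erase v).filter (fun q => W' v q ≠ 0)) ⊆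
          ((Finset.univ.erase v).filter (fun q => W v q ≠ 0)) := by
        intro q hq
        rw [Finset.mem_filter] at hq ⊢
        refine ⟨hq.1, fun h0 => hq.2 ?_⟩
        rw [hrow, h0]
        have : q ≠ w := fun h => by rw [h] at h0; linarith
        rw [if_neg this]; ring
      have hsub2 : ((Finset.univ.erase v).filter (fun p => W' p v ≠ 0)) ⊆
          ((Finset.univ.erase v).filter (fun p => W p v ≠ 0)) := by
        intro p hp
        rw [Finset.mem_filter] at hp ⊢
        refine ⟨hp.1, fun h0 => hp.2 ?_⟩
        rw [hcol, h0]
        have : p ≠ u := fun h => by rw [h] at h0; linarith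
        rw [if_neg this]; ring
      rcases le_total (W u v) (W v w) with hmin | hmin
      · have hmeq : m = W u v := min_eq_left hmin
        have humem2 : u ∈ ((Finset.univ.erase v).filter (fun p => W p v ≠ 0)) :=
          Finset.mem_filter.mpr ⟨humem, by positivity⟩
        have hunot : u ∉ ((Finset.univ.erase v).filter (fun p => W' p v ≠ 0)) := by
          rw [Finset.mem_filter]
          rintro ⟨-, h⟩
          exact h (by rw [hcol, if_pos rfl, hmeq]; ring)
        have h2 : ((Finset.univ.erase v).filter (fun p => W' p v ≠ 0)).card <
            ((Finset.univ.erase v).filter (fun p => W p v ≠ 0)).card :=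
          Finset.card_lt_card ((Finset.ssubset_iff_of_subset hsub2).mpr ⟨u, humem2, hunot⟩)
        have h1 := Finset.card_le_card hsub1
        unfold meas; omega
      · have hmeq : m = W v w := min_eq_right hmin
        have hwmem2 : w ∈ ((Finset.univ.erase v).filter (fun q => W v q ≠ 0)) :=
          Finset.mem_filter.mpr ⟨hwmem, by positivity⟩
        have hwnot : w ∉ ((Finset.univ.erase v).filter (fun q => W' v q ≠ 0)) := by
          rw [Finset.mem_filter]
          rintro ⟨-, h⟩
          exact h (by rw [hrow, if_pos rfl, hmeq]; ring)
        have h1 : ((Finset.univ.erase v).filter (fun q => W' v q ≠ 0)).card <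
            ((Finset.univ.erase v).filter (fun q => W v q ≠ 0)).card :=
          Finset.card_lt_card ((Finset.ssubset_iff_of_subset hsub1).mpr ⟨w, hwmem2, hwnot⟩)
        have h2 := Finset.card_le_card hsub2
        unfold meas; omega
    -- apply IH
    set c' := max (c - m) 0 with hc'def
    have ihres := ih W' hW' (by omega) c' (le_max_right _ _)
      (by
        rw [hout']
        exact max_le (by linarith) (by linarith))
      (by
        rw [hinn']
        exact max_le (by linarith) (by linarith))
    rw [hsol] at ihres
    have hgain : δ ≤ dist u v + dist v w - dist u w := hδ u w hu hw
    have hccm : c ≤ c' + m := by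
      have := le_max_left (c - m) 0
      linarith
    have h1 : δ * c ≤ δ * c' + δ * m := by nlinarith
    have h2 : m * δ ≤ m * (dist u v + dist v w - dist u w) :=
      mul_le_mul_of_nonneg_left hgain hm0.le
    nlinarith [ihres]

lemma strict_add (hstrict : ∀ x y z : M, x ≠ y → y ≠ z → x ≠ z → dist x z < dist x y + dist y z)
    (p q : M →₀ ℝ) (hp : ∑ u, p u = 0) (hq : ∑ u, q u = 0)
    (v : M) (hpv : 0 < p v) (hqv : q v < 0) :
    tcCost (p + q) < tcCost p + tcCost q := by
  -- a point different from v
  obtain ⟨u₀, hu₀⟩ : ∃ u₀ : M, u₀ ≠ v := by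
    by_contra h; push_neg at h
    have hsum : ∑ u : M, p u = p v :=
      Finset.sum_eq_single v (fun b _ hb => absurd (h b) hb) (fun h' => absurd (Finset.mem_univ v) h')
    rw [hp] at hsum
    linarith
  classical
  set T : Finset (M × M) := Finset.univ.filter (fun z => z.1 ≠ v ∧ z.2 ≠ v) with hT
  have hTne : T.Nonempty := ⟨(u₀, u₀), Finset.mem_filter.mpr ⟨Finset.mem_univ _, hu₀, hu₀⟩⟩
  set δ := T.inf' hTne (fun z => dist z.1 v + dist v z.2 - dist z.1 z.2) with hδdef
  have hδpos : 0 < δ := by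
    rw [hδdef, Finset.lt_inf'_iff]
    intro z hz
    obtain ⟨-, hz1, hz2⟩ := Finset.mem_filter.mp hz
    by_cases hzz : z.1 = z.2
    · rw [hzz]
      have h1 : 0 < dist z.2 v := dist_pos.mpr hz2
      have h2 : dist v z.2 = dist z.2 v := dist_comm _ _
      rw [dist_self]
      linarith
    · have := hstrict z.1 v z.2 hz1 (fun h => hz2 h.symm) hzz
      linarith
  have hδle : ∀ a b : M, a ≠ v → b ≠ v → δ ≤ dist a v + dist v b - dist a b := by
    intro a b ha hb
    exact Finset.inf'_le _ (Finset.mem_filter.mpr ⟨Finset.mem_univ (a, b), ha, hb⟩)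
  set m₀ := min (p v) (-(q v)) with hm₀
  have hm₀pos : 0 < m₀ := lt_min hpv (by linarith)
  set ε := δ * m₀ / 4 with hε
  have hεpos : 0 < ε := by positivity
  obtain ⟨cp, hcpS, hcplt⟩ := Real.lt_sInf_add_pos (tcSet_nonempty p hp v) hεpos
  obtain ⟨cq, hcqS, hcqlt⟩ := Real.lt_sInf_add_pos (tcSet_nonempty q hq v) hεpos
  obtain ⟨Wp, hWp, hWpsol, hWpcost⟩ := plan_to_mat hcpS
  obtain ⟨Wq, hWq, hWqsol, hWqcost⟩ := plan_to_mat hcqS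
  set W : M → M → ℝ := fun a b => Wp a b + Wq a b with hWdef
  have hWnn : ∀ a b, 0 ≤ W a b := fun a b => add_nonneg (hWp a b) (hWq a b)
  have hWsol : msolve W = p + q := by rw [hWdef, msolve_add, hWpsol, hWqsol]
  have hWcost : mcost W = cp + cq := by rw [hWdef, mcost_add, hWpcost, hWqcost]
  have hop : outf v Wp - innf v Wp = p v := by rw [← msolve_apply', hWpsol]
  have hoq : outf v Wq - innf v Wq = q v := by rw [← msolve_apply', hWqsol]
  have hinnWpnn : 0 ≤ innf v Wp := Finset.sum_nonneg fun x _ => hWp x v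
  have houtWqnn : 0 ≤ outf v Wq := Finset.sum_nonneg fun x _ => hWq v x
  have hinnWqnn : 0 ≤ innf v Wq := Finset.sum_nonneg fun x _ => hWq x v
  have houtWpnn : 0 ≤ outf v Wp := Finset.sum_nonneg fun x _ => hWp v x
  have houtsplit : outf v W = outf v Wp + outf v Wq := by
    rw [outf, outf, outf, ← Finset.sum_add_distrib]
  have hinnsplit : innf v W = innf v Wp + innf v Wq := by
    rw [innf, innf, innf, ← Finset.sum_add_distrib]
  have hco : m₀ ≤ outf v W := by
    have h1 : m₀ ≤ p v := min_le_left _ _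
    linarith
  have hci : m₀ ≤ innf v W := by
    have h1 : m₀ ≤ -(q v) := min_le_right _ _
    linarith
  have hmain := reroute v δ hδpos.le hδle (meas v W) W hWnn le_rfl m₀ hm₀pos.le hco hci
  rw [hWsol, hWcost] at hmain
  have hcp' : cp < tcCost p + ε := hcplt
  have hcq' : cq < tcCost q + ε := hcqlt
  have hδm : 0 < δ * m₀ := mul_pos hδpos hm₀pos
  have hε4 : ε = δ * m₀ / 4 := hε
  linarith

end TC

/-- In a finite metric space where all triangle inequalities for pairwise distinct
triples are strict, completely unrelated nonzero transportation problems have pairwise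
disjoint supports. -/
theorem unrelated_disjoint_supports {M : Type*} [MetricSpace M] [Fintype M]
    (hstrict : ∀ x y z : M, x ≠ y → y ≠ z → x ≠ z → dist x z < dist x y + dist y z)
    (k : ℕ) (f : Fin k → (M →₀ ℝ))
    (hz : ∀ i, (f i).sum (fun _ r => r) = 0)
    (hne : ∀ i, f i ≠ 0)
    (hunrel : ∀ a : Fin k → ℝ,
      tcCost (∑ i, a i • ((tcCost (f i))⁻¹ • f i)) = ∑ i, |a i|) :
    ∀ i j, i ≠ j → Disjoint (f i).support (f j).support := by
  classical
  have hz' : ∀ i, ∑ u : M, f i u = 0 := by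
    intro i
    have h := hz i
    rwa [Finsupp.sum_fintype _ _ (fun _ => rfl)] at h
  intro i j hij
  rw [Finset.disjoint_left]
  intro v hvi hvj
  exfalso
  have hfiv : f i v ≠ 0 := Finsupp.mem_support_iff.mp hvi
  have hfjv : f j v ≠ 0 := Finsupp.mem_support_iff.mp hvj
  have hsingle : ∀ (l : Fin k) (s : ℝ), tcCost (s • ((tcCost (f l))⁻¹ • f l)) = |s| := by
    intro l s
    have h := hunrel (fun m => if m = l then s else 0)
    have hL : (∑ m, (if m = l then s else 0) • ((tcCost (f m))⁻¹ • f m))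
        = s • ((tcCost (f l))⁻¹ • f l) := by
      rw [Finset.sum_eq_single l (fun b _ hb => by rw [if_neg hb, zero_smul])
        (fun h' => absurd (Finset.mem_univ l) h'), if_pos rfl]
    have hR : (∑ m, |if m = l then s else 0|) = |s| := by
      rw [Finset.sum_eq_single l (fun b _ hb => by rw [if_neg hb, abs_zero])
        (fun h' => absurd (Finset.mem_univ l) h'), if_pos rfl]
    rw [hL, hR] at h
    exact h
  have hnorm : ∀ l : Fin k, tcCost ((tcCost (f l))⁻¹ • f l) = 1 := by
    intro l
    have h := hsingle l 1
    rw [one_smul] at h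
    simpa using h
  have hci : ∀ l : Fin k, tcCost (f l) ≠ 0 := by
    intro l hl
    have h := hnorm l
    rw [hl, inv_zero, zero_smul, tcCost_zero] at h
    norm_num at h
  have hgz : ∀ l : Fin k, ∑ u : M, ((tcCost (f l))⁻¹ • f l) u = 0 := by
    intro l
    simp only [Finsupp.smul_apply, smul_eq_mul, ← Finset.mul_sum, hz' l, mul_zero]
  have hgiv : ((tcCost (f i))⁻¹ • f i) v ≠ 0 := by
    simp only [Finsupp.smul_apply, smul_eq_mul]
    exact mul_ne_zero (inv_ne_zero (hci i)) hfiv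
  have hgjv : ((tcCost (f j))⁻¹ • f j) v ≠ 0 := by
    simp only [Finsupp.smul_apply, smul_eq_mul]
    exact mul_ne_zero (inv_ne_zero (hci j)) hfjv
  set gi := (tcCost (f i))⁻¹ • f i with hgi
  set gj := (tcCost (f j))⁻¹ • f j with hgj
  set s : ℝ := if 0 < gi v * gj v then -1 else 1 with hs
  have hsabs : |s| = 1 := by rw [hs]; split <;> simp
  have hopp : gi v * (s * gj v) < 0 := by
    rw [hs]; split_ifs with h
    · nlinarith
    · have hne0 : gi v * gj v ≠ 0 := mul_ne_zero hgiv hgjv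
      have hlt : gi v * gj v < 0 := lt_of_le_of_ne (not_lt.mp h) hne0
      nlinarith
  have hpair : tcCost (gi + s • gj) = 2 := by
    have h := hunrel (fun m => (if m = i then 1 else 0) + (if m = j then s else 0))
    have hL : (∑ m, ((if m = i then (1:ℝ) else 0) + (if m = j then s else 0)) • ((tcCost (f m))⁻¹ • f m))
        = gi + s • gj := by
      simp only [add_smul, ite_smul, zero_smul, one_smul, Finset.sum_add_distrib]
      rw [Finset.sum_ite_eq' Finset.univ i (fun m => (tcCost (f m))⁻¹ • f m),
        Finset.sum_ite_eq' Finset.univ j (fun m => s • ((tcCost (f m))⁻¹ • f m))]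
      simp [hgi, hgj]
    have hR : (∑ m, |(if m = i then (1:ℝ) else 0) + (if m = j then s else 0)|) = 2 := by
      have habs : ∀ m, |(if m = i then (1:ℝ) else 0) + (if m = j then s else 0)|
          = (if m = i then (1:ℝ) else 0) + (if m = j then |s| else 0) := by
        intro m
        by_cases h1 : m = i
        · have h2 : m ≠ j := fun h2 => hij (h1.symm.trans h2)
          simp [h1, h2, hij]
        · by_cases h2 : m = j
          · simp [h1, h2, Ne.symm hij]
          · simp [h1, h2]
      rw [Finset.sum_congr rfl fun m _ => habs m, Finset.sum_add_distrib,
        Finset.sum_ite_eq' Finset.univ i (fun _ => (1:ℝ)),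
        Finset.sum_ite_eq' Finset.univ j (fun _ => |s|)]
      rw [if_pos (Finset.mem_univ i), if_pos (Finset.mem_univ j), hsabs]
      norm_num
    rw [hL, hR] at h
    exact h
  have hsgj : tcCost (s • gj) = 1 := by rw [hgj, hsingle j s, hsabs]
  have hgz2 : ∑ u : M, (s • gj) u = 0 := by
    simp only [Finsupp.smul_apply, smul_eq_mul, ← Finset.mul_sum]
    rw [hgj, hgz j, mul_zero]
  rcases lt_or_gt_of_ne hgiv with hneg | hpos
  · have h2 : 0 < s * gj v := by nlinarith
    have hlt := strict_add hstrict (s • gj) gi hgz2 (hgi ▸ hgz i) v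
      (by simpa using h2) hneg
    rw [add_comm, hpair, hsgj, hgi, hnorm i] at hlt
    linarith
  · have h2 : s * gj v < 0 := by nlinarith
    have hlt := strict_add hstrict gi (s • gj) (hgi ▸ hgz i) hgz2 v hpos
      (by simpa using h2)
    rw [hpair, hsgj, hgi, hnorm i] at hlt
    linarith
end

section
/- Let f = Σ_{i=1}^n a_i(1_{u_i} − 1_{v_i}) with a_i > 0 on a metric space M of 2n points, where {u_i v_i} is a minimum weight perfect matching. Suppose an optimal transportation plan for f moves product only from points u_i to points v_j (condition (A)) and contains a cycle: for indices n(0),…,n(k) with n(k+1)=n(0), an amount c > 0 is moved from u_{n(i)} to v_{n(i+1)} for each i = 0,…,k. Then Σ_{i=0}^k d(u_{n(i)}, v_{n(i)}) ≤ Σ_{i=0}^k d(u_{n(i)}, v_{n(i+1)}), and replacing the cycle moves by moving c units from each u_{n(i)} directly to v_{n(i)} yields another optimal plan satisfying (A) with strictly larger total amount moved along matching edges. -/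
open Finset Function

section TransportCost

variable {M : Type*} [MetricSpace M] {f : M →₀ ℝ}

lemma tcCost_le_of_eq_sum {ι : Type*} [Fintype ι] (b : ι → ℝ) (x y : ι → M)
    (hb : ∀ i, 0 ≤ b i)
    (hf : f = ∑ i, b i • (Finsupp.single (x i) 1 - Finsupp.single (y i) 1)) :
    tcCost f ≤ ∑ i, b i * dist (x i) (y i) := by
  set e := (Fintype.equivFin ι).symm
  refine csInf_le ⟨0, ?_⟩ ⟨_, b ∘ e, x ∘ e, y ∘ e, fun _ => hb _, ?_, (e.sum_comp _).symm⟩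
  · rintro _ ⟨N, b, x, y, hb, -, rfl⟩
    exact sum_nonneg fun i _ => mul_nonneg (hb i) dist_nonneg
  · rw [hf]
    exact (e.sum_comp _).symm

lemma tcCost_le_of_eq_sum_sum {κ ν : Type*} [Fintype κ] [Fintype ν] (t : κ → ν → ℝ)
    (x : κ → M) (y : ν → M) (ht : ∀ i j, 0 ≤ t i j)
    (hf : f = ∑ i, ∑ j, t i j • (Finsupp.single (x i) 1 - Finsupp.single (y j) 1)) :
    tcCost f ≤ ∑ i, ∑ j, t i j * dist (x i) (y j) := by
  simpa only [Fintype.sum_prod_type] using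
    tcCost_le_of_eq_sum (f := f) (fun q : κ × ν => t q.1 q.2) (fun q => x q.1) (fun q => y q.2)
      (fun q => ht _ _) (by simp only [hf, Fintype.sum_prod_type])

end TransportCost

section Matching

variable {M κ ι : Type*} [MetricSpace M] [Fintype κ] {u v : κ → M}

lemma sum_dist_le_sum_dist_perm (hmatch : Bijective (Sum.elim u v))
    (hmin : ∀ u' v' : κ → M, Bijective (Sum.elim u' v') →
      ∑ i, dist (u i) (v i) ≤ ∑ i, dist (u' i) (v' i))
    (π : Equiv.Perm κ) : ∑ i, dist (u i) (v i) ≤ ∑ i, dist (u i) (v (π i)) := by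
  refine hmin u (v ∘ π) ?_
  rw [← comp_id u, ← Sum.elim_comp_map]
  exact hmatch.comp (Sum.map_bijective.2 ⟨bijective_id, π.bijective⟩)

lemma sum_sub_viaEmbedding {G : Type*} [AddCommGroup G] [Fintype ι]
    (σ : Equiv.Perm ι) (m : ι ↪ κ) (F : κ → κ → G) :
    ∑ i, (F i (σ.viaEmbedding m i) - F i i) = ∑ p, (F (m p) (m (σ p)) - F (m p) (m p)) := by
  refine (Fintype.sum_of_injective m m.injective _ _ (fun i hi => ?_) fun p => ?_).symm
  · rw [σ.viaEmbedding_apply_of_notMem m i hi, sub_self]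
  · rw [σ.viaEmbedding_apply]

lemma sum_dist_le_sum_dist_cycle [Fintype ι] (hmatch : Bijective (Sum.elim u v))
    (hmin : ∀ u' v' : κ → M, Bijective (Sum.elim u' v') →
      ∑ i, dist (u i) (v i) ≤ ∑ i, dist (u' i) (v' i))
    (σ : Equiv.Perm ι) (m : ι ↪ κ) :
    ∑ p, dist (u (m p)) (v (m p)) ≤ ∑ p, dist (u (m p)) (v (m (σ p))) := by
  have hperm := sum_dist_le_sum_dist_perm hmatch hmin (σ.viaEmbedding m)
  have hdiff := sum_sub_viaEmbedding σ m fun i j => dist (u i) (v j)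
  rw [sum_sub_distrib, sum_sub_distrib] at hdiff
  linarith

end Matching

section Reroute

variable {ι κ R : Type*} [Fintype ι] [DecidableEq κ]

def reroute_s10 [Ring R] (s : κ → κ → R) (m g : ι → κ) (c : R) : κ → κ → R :=
  fun i j => s i j + (if i = j ∧ ∃ p, m p = i then c else 0)
    - (if ∃ p, m p = i ∧ g p = j then c else 0)

lemma sum_sum_ite_exists_smul [Fintype κ] {V : Type*} [Semiring R] [AddCommMonoid V]
    [Module R V] {m : ι → κ} (hm : Injective m) (g : ι → κ) (c : R) (X : κ → κ → V) :
    ∑ i, ∑ j, (if ∃ p, m p = i ∧ g p = j then c else 0) • X i j = c • ∑ p, X (m p) (g p) := by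
  rw [smul_sum]
  refine (Fintype.sum_of_injective m hm _ _ (fun i hi => ?_) fun p => ?_).symm
  · refine sum_eq_zero fun j _ => ?_
    rw [if_neg (fun ⟨p, hp, _⟩ => hi ⟨p, hp⟩), zero_smul]
  · have hcond : ∀ j, (∃ q, m q = m p ∧ g q = j) ↔ g p = j :=
      fun j => ⟨fun ⟨q, hq, hj⟩ => hm hq ▸ hj, fun hj => ⟨p, rfl, hj⟩⟩
    simp only [hcond, ite_smul, zero_smul, sum_ite_eq, mem_univ, if_true]

lemma sum_sum_ite_diag_smul [Fintype κ] {V : Type*} [Semiring R] [AddCommMonoid V]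
    [Module R V] {m : ι → κ} (hm : Injective m) (c : R) (X : κ → κ → V) :
    ∑ i, ∑ j, (if i = j ∧ ∃ p, m p = i then c else 0) • X i j = c • ∑ p, X (m p) (m p) := by
  convert sum_sum_ite_exists_smul hm m c X using 5 with i _ j _
  exact ⟨fun ⟨hij, p, hp⟩ => ⟨p, hp, hp.trans hij⟩,
    fun ⟨p, hi, hj⟩ => ⟨hi.symm.trans hj, p, hi⟩⟩

lemma sum_sum_reroute_smul [Fintype κ] {V : Type*} [Ring R] [AddCommGroup V] [Module R V]
    (s : κ → κ → R) {m : ι → κ} (hm : Injective m) (g : ι → κ) (c : R) (X : κ → κ → V) :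
    ∑ i, ∑ j, reroute_s10 s m g c i j • X i j
      = ∑ i, ∑ j, s i j • X i j + c • (∑ p, X (m p) (m p) - ∑ p, X (m p) (g p)) := by
  simp only [reroute_s10, add_smul, sub_smul, sum_add_distrib, sum_sub_distrib,
    sum_sum_ite_diag_smul hm, sum_sum_ite_exists_smul hm, smul_sub, add_sub_assoc]

lemma sum_sum_reroute_perm_smul_single [Fintype κ] [Ring R] {M : Type*} (s : κ → κ → R)
    {m : ι → κ} (hm : Injective m) (c : R) (σ : Equiv.Perm ι) (u v : κ → M) :
    ∑ i, ∑ j, reroute_s10 s m (fun p => m (σ p)) c i j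
        • (Finsupp.single (u i) (1 : R) - Finsupp.single (v j) 1)
      = ∑ i, ∑ j, s i j • (Finsupp.single (u i) (1 : R) - Finsupp.single (v j) 1) := by
  rw [sum_sum_reroute_smul s hm, sum_sub_distrib, sum_sub_distrib, sub_sub_sub_cancel_left,
    Equiv.sum_comp σ fun p => Finsupp.single (v (m p)) (1 : R), sub_self, smul_zero, add_zero]

variable {s : κ → κ → ℝ} {m g : ι → κ} {c : ℝ}

lemma reroute_nonneg (hs : ∀ i j, 0 ≤ s i j) (hoff : ∀ p, m p ≠ g p) (hc : 0 ≤ c)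
    (hcyc : ∀ p, c ≤ s (m p) (g p)) (i j : κ) : 0 ≤ reroute_s10 s m g c i j := by
  unfold reroute_s10
  split_ifs with hdiag hedge hedge
  · obtain ⟨rfl, -⟩ := hdiag
    obtain ⟨p, hi, hj⟩ := hedge
    exact absurd (hi.trans hj.symm) (hoff p)
  · linarith [hs i j]
  · obtain ⟨p, rfl, rfl⟩ := hedge
    linarith [hcyc p]
  · linarith [hs i j]

lemma reroute_apply_self (hoff : ∀ p, m p ≠ g p) (i : κ) :
    reroute_s10 s m g c i i = s i i + if ∃ p, m p = i then c else 0 := by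
  have hloop : ¬∃ p, m p = i ∧ g p = i := fun ⟨p, hi, hj⟩ => hoff p (hi.trans hj.symm)
  simp only [reroute_s10, if_neg hloop, sub_zero, true_and]

lemma sum_diag_lt_sum_reroute_diag [Fintype κ] [Nonempty ι] (hoff : ∀ p, m p ≠ g p)
    (hc : 0 < c) : ∑ i, s i i < ∑ i, reroute_s10 s m g c i i := by
  obtain ⟨p⟩ := ‹Nonempty ι›
  refine sum_lt_sum (fun i _ => ?_) ⟨m p, mem_univ _, ?_⟩ <;> rw [reroute_apply_self hoff]
  · split_ifs <;> linarith
  · rw [if_pos ⟨p, rfl⟩]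
    linarith

lemma sum_sum_reroute_mul_le [Fintype κ] (hm : Injective m) (hc : 0 ≤ c) {D : κ → κ → ℝ}
    (hD : ∑ p, D (m p) (m p) ≤ ∑ p, D (m p) (g p)) :
    ∑ i, ∑ j, reroute_s10 s m g c i j * D i j ≤ ∑ i, ∑ j, s i j * D i j := by
  have h := sum_sum_reroute_smul s hm g c D
  simp only [smul_eq_mul] at h
  rw [h]
  linarith [mul_nonneg hc (sub_nonneg.2 hD)]

end Reroute

theorem cycle_uncrossing_general {M : Type*} [MetricSpace M]
    (n : ℕ)
    (u v : Fin n → M) (hmatch : Function.Bijective (Sum.elim u v))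
    (hmin : ∀ u' v' : Fin n → M, Function.Bijective (Sum.elim u' v') →
      ∑ i, dist (u i) (v i) ≤ ∑ i, dist (u' i) (v' i))
    (a : Fin n → ℝ)
    (s : Fin n → Fin n → ℝ) (hs : ∀ i j, 0 ≤ s i j)
    (hplan : (∑ i, a i • (Finsupp.single (u i) (1 : ℝ) - Finsupp.single (v i) 1))
      = ∑ i, ∑ j, s i j • (Finsupp.single (u i) (1 : ℝ) - Finsupp.single (v j) 1))
    (hopt : ∑ i, ∑ j, s i j * dist (u i) (v j)
      = tcCost (∑ i, a i • (Finsupp.single (u i) (1 : ℝ) - Finsupp.single (v i) 1)))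
    (k : ℕ) (hk : 1 ≤ k)
    (m : Fin (k + 1) → Fin n) (hm : Function.Injective m)
    (c : ℝ) (hc : 0 < c)
    (hcyc : ∀ p : Fin (k + 1), c ≤ s (m p) (m (p + 1))) :
    (∑ p : Fin (k + 1), dist (u (m p)) (v (m p))
      ≤ ∑ p : Fin (k + 1), dist (u (m p)) (v (m (p + 1)))) ∧
    ∀ s' : Fin n → Fin n → ℝ,
      (s' = fun i j => s i j + (if i = j ∧ (∃ p, m p = i) then c else 0)
        - (if ∃ p, m p = i ∧ m (p + 1) = j then c else 0)) →
      (∀ i j, 0 ≤ s' i j) ∧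
      ((∑ i, a i • (Finsupp.single (u i) (1 : ℝ) - Finsupp.single (v i) 1))
        = ∑ i, ∑ j, s' i j • (Finsupp.single (u i) (1 : ℝ) - Finsupp.single (v j) 1)) ∧
      (∑ i, ∑ j, s' i j * dist (u i) (v j)
        = tcCost (∑ i, a i • (Finsupp.single (u i) (1 : ℝ) - Finsupp.single (v i) 1))) ∧
      (∑ i, s i i < ∑ i, s' i i) := by
  have hoff : ∀ p : Fin (k + 1), m p ≠ m (p + 1) := fun p h =>
    left_ne_add.2 (Fin.one_eq_zero_iff.not.2 (by omega)) (hm h)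
  have hcycle := sum_dist_le_sum_dist_cycle hmatch hmin (Equiv.addRight 1) ⟨m, hm⟩
  refine ⟨hcycle, fun s' hs' => ?_⟩
  -- the `if`s of the statement decide `∃ p` by `Nat.decidableExistsFin`, not through `Fintype`
  obtain rfl : s' = reroute_s10 s m (fun p => m (p + 1)) c := by
    subst hs'
    unfold reroute_s10
    congr!
  have hnn := reroute_nonneg hs hoff hc.le hcyc
  have hplan' := hplan.trans
    (sum_sum_reroute_perm_smul_single s hm c (Equiv.addRight 1) u v).symm
  refine ⟨hnn, hplan', le_antisymm ?_ (tcCost_le_of_eq_sum_sum _ u v hnn hplan'),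
    sum_diag_lt_sum_reroute_diag hoff hc⟩
  exact hopt ▸ sum_sum_reroute_mul_le hm hc.le hcycle

/-- Cycle-uncrossing step. Let `f = Σ aᵢ(1_{uᵢ} − 1_{vᵢ})`, `aᵢ > 0`, where `{uᵢvᵢ}` is a
minimum weight perfect matching of a `2n`-point metric space. Suppose an optimal plan for
`f` satisfying condition (A) is given by a matrix `s` (moving `s i j` units from `uᵢ` to
`v_j`) and contains a cycle: `c > 0` units are moved from `u_{m p}` to `v_{m (p+1)}` for
`p = 0,…,k` (indices mod `k+1`, `m` injective). Then
`Σ_p d(u_{m p}, v_{m p}) ≤ Σ_p d(u_{m p}, v_{m (p+1)})`, and rerouting the cycle along the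
matching edges yields another optimal plan satisfying (A) whose total amount moved along
matching edges is strictly larger. -/
theorem cycle_uncrossing {M : Type*} [MetricSpace M] [Fintype M]
    (n : ℕ) (hcard : Fintype.card M = 2 * n)
    (u v : Fin n → M) (hmatch : Function.Bijective (Sum.elim u v))
    (hmin : ∀ u' v' : Fin n → M, Function.Bijective (Sum.elim u' v') →
      ∑ i, dist (u i) (v i) ≤ ∑ i, dist (u' i) (v' i))
    (a : Fin n → ℝ) (ha : ∀ i, 0 < a i)
    (s : Fin n → Fin n → ℝ) (hs : ∀ i j, 0 ≤ s i j)
    (hplan : (∑ i, a i • (Finsupp.single (u i) (1 : ℝ) - Finsupp.single (v i) 1))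
      = ∑ i, ∑ j, s i j • (Finsupp.single (u i) (1 : ℝ) - Finsupp.single (v j) 1))
    (hopt : ∑ i, ∑ j, s i j * dist (u i) (v j)
      = tcCost (∑ i, a i • (Finsupp.single (u i) (1 : ℝ) - Finsupp.single (v i) 1)))
    (k : ℕ) (hk : 1 ≤ k)
    (m : Fin (k + 1) → Fin n) (hm : Function.Injective m)
    (c : ℝ) (hc : 0 < c)
    (hcyc : ∀ p : Fin (k + 1), c ≤ s (m p) (m (p + 1))) :
    (∑ p : Fin (k + 1), dist (u (m p)) (v (m p))
      ≤ ∑ p : Fin (k + 1), dist (u (m p)) (v (m (p + 1)))) ∧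
    ∀ s' : Fin n → Fin n → ℝ,
      (s' = fun i j => s i j + (if i = j ∧ (∃ p, m p = i) then c else 0)
        - (if ∃ p, m p = i ∧ m (p + 1) = j then c else 0)) →
      (∀ i j, 0 ≤ s' i j) ∧
      ((∑ i, a i • (Finsupp.single (u i) (1 : ℝ) - Finsupp.single (v i) 1))
        = ∑ i, ∑ j, s' i j • (Finsupp.single (u i) (1 : ℝ) - Finsupp.single (v j) 1)) ∧
      (∑ i, ∑ j, s' i j * dist (u i) (v j)
        = tcCost (∑ i, a i • (Finsupp.single (u i) (1 : ℝ) - Finsupp.single (v i) 1))) ∧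
      (∑ i, s i i < ∑ i, s' i i) :=
  cycle_uncrossing_general n u v hmatch hmin a s hs hplan hopt k hk m hm c hc hcyc
end

section
/- With the hypotheses of the previous statement (complete graph on an even metric space V, optimal dual solution {y_C} with all y_C ≥ 0, including for trivial cuts, minimum weight perfect matching M = {u_i v_i}), define l_i(w) = Σ{ y_C : C contains the edge u_i v_i and C separates u_i from w } (and l_i(u_i)=0). Then: (1) each l_i is 1-Lipschitz; (2) l_i(v_i) − l_i(u_i) = d(u_i,v_i); (3) l_i(v_j) = l_i(u_j) for j ≠ i; (4) Σ_{i=1}^n |l_i(w) − l_i(z)| ≤ d(w,z) for all w,z ∈ V. -/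
/-- `S` separates `w` from `z` iff exactly one of them lies in `S`. -/
def separates {V : Type*} [DecidableEq V] (S : Finset V) (w z : V) : Prop :=
  (w ∈ S ∧ z ∉ S) ∨ (w ∉ S ∧ z ∈ S)

instance {V : Type*} [DecidableEq V] (S : Finset V) (w z : V) :
    Decidable (separates S w z) := by unfold separates; infer_instance

/-- Given an optimal dual solution `y` for minimum weight perfect matching that is
nonnegative on all odd cuts (including trivial ones), the functions
`lᵢ(w) = Σ { y_C : C contains the edge uᵢvᵢ and separates uᵢ from w }` satisfy:
(1) each `lᵢ` is `1`-Lipschitz; (2) `lᵢ(vᵢ) − lᵢ(uᵢ) = d(uᵢ,vᵢ)`;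
(3) `lᵢ(v_j) = lᵢ(u_j)` for `j ≠ i`; (4) `Σᵢ |lᵢ(w) − lᵢ(z)| ≤ d(w,z)`. -/
theorem dual_solution_functionals {V : Type*} [MetricSpace V] [Fintype V] [DecidableEq V]
    (n : ℕ) (hcard : Fintype.card V = 2 * n)
    (u v : Fin n → V) (hmatch : Function.Bijective (Sum.elim u v))
    (hmin : ∀ u' v' : Fin n → V, Function.Bijective (Sum.elim u' v') →
      ∑ i, dist (u i) (v i) ≤ ∑ i, dist (u' i) (v' i))
    (y : Finset V → ℝ)
    (hoddsupp : ∀ S : Finset V, ¬ Odd S.card → y S = 0)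
    (hnn : ∀ S : Finset V, 0 ≤ y S)
    (hfeas : ∀ w z : V, w ≠ z →
      ∑ S ∈ Finset.univ.filter (fun S : Finset V => separates S w z), y S ≤ dist w z)
    (hopt : ∑ S : Finset V, y S = ∑ i, dist (u i) (v i))
    (l : Fin n → V → ℝ)
    (hl : l = fun i w => ∑ S ∈ Finset.univ.filter
      (fun S : Finset V => separates S (u i) (v i) ∧ separates S (u i) w), y S) :
    (∀ i, LipschitzWith 1 (l i)) ∧
    (∀ i, l i (v i) - l i (u i) = dist (u i) (v i)) ∧
    (∀ i j, i ≠ j → l i (v j) = l i (u j)) ∧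
    (∀ w z : V, ∑ i, |l i w - l i z| ≤ dist w z) := by
  classical
  -- basic consequences of bijectivity
  have hinj := hmatch.injective
  have hsep_iff : ∀ (S : Finset V) (a b : V), separates S a b ↔ ((a ∈ S) ↔ (b ∉ S)) := by
    intro S a b; unfold separates; tauto
  have hsepself : ∀ (S : Finset V) (x : V), ¬ separates S x x := by
    intro S x h; rw [hsep_iff] at h; tauto
  have huv : ∀ i, u i ≠ v i := by
    intro i h
    have h2 : (Sum.inl i : Fin n ⊕ Fin n) = Sum.inr i := hinj (by simpa using h)
    simp at h2
  have hu_inj : Function.Injective u := by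
    intro a b hab
    have h2 : (Sum.inl a : Fin n ⊕ Fin n) = Sum.inl b := hinj (by simpa using hab)
    simpa using h2
  have hv_inj : Function.Injective v := by
    intro a b hab
    have h2 : (Sum.inr a : Fin n ⊕ Fin n) = Sum.inr b := hinj (by simpa using hab)
    simpa using h2
  have huvne : ∀ i j, u i ≠ v j := by
    intro i j h
    have h2 : (Sum.inl i : Fin n ⊕ Fin n) = Sum.inr j := hinj (by simpa using h)
    simp at h2
  -- every odd cut separates some matching edge
  have hodd_sep : ∀ S : Finset V, Odd S.card → ∃ i, separates S (u i) (v i) := by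
    intro S hS
    by_contra h
    push_neg at h
    have hno : ∀ i, u i ∈ S ↔ v i ∈ S := by
      intro i
      have h1 := h i
      rw [hsep_iff] at h1
      tauto
    set A := Finset.univ.filter (fun i => u i ∈ S) with hA
    have hS_eq : S = A.image u ∪ A.image v := by
      ext x
      simp only [Finset.mem_union, Finset.mem_image, hA, Finset.mem_filter, Finset.mem_univ,
        true_and]
      constructor
      · intro hx
        obtain ⟨s, hs⟩ := hmatch.surjective x
        cases s with
        | inl i =>
          simp only [Sum.elim_inl] at hs
          exact Or.inl ⟨i, hs ▸ hx, hs⟩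
        | inr i =>
          simp only [Sum.elim_inr] at hs
          exact Or.inr ⟨i, (hno i).mpr (hs ▸ hx), hs⟩
      · rintro (⟨i, hi, rfl⟩ | ⟨i, hi, rfl⟩)
        · exact hi
        · exact (hno i).mp hi
    have hdisj : Disjoint (A.image u) (A.image v) := by
      rw [Finset.disjoint_left]
      intro x hx hx'
      simp only [Finset.mem_image] at hx hx'
      obtain ⟨i, _, hi⟩ := hx
      obtain ⟨j, _, hj⟩ := hx'
      exact huvne i j (hi.trans hj.symm)
    have hcardS : S.card = 2 * A.card := by
      rw [hS_eq, Finset.card_union_of_disjoint hdisj,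
        Finset.card_image_of_injective _ hu_inj, Finset.card_image_of_injective _ hv_inj]
      ring
    obtain ⟨m, hm⟩ := hS
    omega
  -- double counting (general form)
  have hdc : ∀ (Q : Finset V → Prop) (_ : DecidablePred Q),
      ∑ i, ∑ S ∈ Finset.univ.filter (fun S => separates S (u i) (v i) ∧ Q S), y S
        = ∑ S ∈ Finset.univ.filter (fun S => Q S),
            ((Finset.univ.filter (fun i => separates S (u i) (v i))).card : ℝ) * y S := by
    intro Q _
    simp only [Finset.sum_filter]
    rw [Finset.sum_comm]
    refine Finset.sum_congr rfl fun S _ => ?_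
    by_cases hQ : Q S
    · simp only [hQ, and_true, if_true]
      rw [← Finset.sum_filter, Finset.sum_const, nsmul_eq_mul]
    · simp [hQ]
  -- pointwise lower bound y S ≤ k S * y S
  have hle : ∀ S : Finset V,
      y S ≤ ((Finset.univ.filter (fun i => separates S (u i) (v i))).card : ℝ) * y S := by
    intro S
    by_cases hy : y S = 0
    · simp [hy]
    · have hodd : Odd S.card := by
        by_contra h; exact hy (hoddsupp S h)
      obtain ⟨i, hi⟩ := hodd_sep S hodd
      have hcard : 1 ≤ (Finset.univ.filter (fun i => separates S (u i) (v i))).card :=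
        Finset.card_pos.mpr ⟨i, by simp [hi]⟩
      have hc : (1 : ℝ) ≤ ((Finset.univ.filter (fun i => separates S (u i) (v i))).card : ℝ) := by
        exact_mod_cast hcard
      nlinarith [hnn S]
  -- the main equality chain
  have hdc1 := hdc (fun _ => True) (by infer_instance)
  simp only [and_true, Finset.filter_true] at hdc1
  have h2 : ∑ S : Finset V,
      ((Finset.univ.filter (fun i => separates S (u i) (v i))).card : ℝ) * y S
        ≤ ∑ S : Finset V, y S := by
    rw [← hdc1, hopt]
    exact Finset.sum_le_sum fun i _ => hfeas _ _ (huv i)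
  have hky : ∀ S : Finset V,
      ((Finset.univ.filter (fun i => separates S (u i) (v i))).card : ℝ) * y S = y S := by
    intro S
    by_contra hne
    have hlt : y S < ((Finset.univ.filter (fun i => separates S (u i) (v i))).card : ℝ) * y S :=
      lt_of_le_of_ne (hle S) (fun h => hne h.symm)
    have := Finset.sum_lt_sum (fun T (_ : T ∈ Finset.univ) => hle T)
      ⟨S, Finset.mem_univ S, hlt⟩
    linarith
  have hsum_eq : ∑ i, ∑ S ∈ Finset.univ.filter (fun S => separates S (u i) (v i)), y S
      = ∑ i, dist (u i) (v i) := by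
    calc ∑ i, ∑ S ∈ Finset.univ.filter (fun S => separates S (u i) (v i)), y S
        = ∑ S : Finset V,
            ((Finset.univ.filter (fun i => separates S (u i) (v i))).card : ℝ) * y S := hdc1
      _ = ∑ S : Finset V, y S := Finset.sum_congr rfl fun S _ => hky S
      _ = ∑ i, dist (u i) (v i) := hopt
  have hFi : ∀ i, ∑ S ∈ Finset.univ.filter (fun S => separates S (u i) (v i)), y S
      = dist (u i) (v i) := by
    intro i
    by_contra hne
    have hlt : ∑ S ∈ Finset.univ.filter (fun S => separates S (u i) (v i)), y S
        < dist (u i) (v i) := lt_of_le_of_ne (hfeas _ _ (huv i)) hne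
    have := Finset.sum_lt_sum (fun j (_ : j ∈ Finset.univ) => hfeas _ _ (huv j))
      ⟨i, Finset.mem_univ i, hlt⟩
    linarith
  -- key: a cut with positive dual value separates exactly one matching edge
  have hkey : ∀ (S : Finset V) (i j : Fin n), i ≠ j →
      separates S (u i) (v i) → separates S (u j) (v j) → y S = 0 := by
    intro S i j hij hi hj
    have h2c : 2 ≤ (Finset.univ.filter (fun i => separates S (u i) (v i))).card :=
      Finset.one_lt_card.mpr ⟨i, by simp [hi], j, by simp [hj], hij⟩
    have hc : (2 : ℝ) ≤ ((Finset.univ.filter (fun i => separates S (u i) (v i))).card : ℝ) := by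
      exact_mod_cast h2c
    have := hky S
    have hnnS := hnn S
    nlinarith
  -- pointwise Lipschitz-type bound
  have hbound : ∀ (i : Fin n) (w z : V),
      |l i w - l i z| ≤ ∑ S ∈ Finset.univ.filter
        (fun S => separates S (u i) (v i) ∧ separates S w z), y S := by
    intro i w z
    rw [hl]
    set A := Finset.univ.filter (fun S : Finset V => separates S (u i) (v i) ∧ separates S (u i) w)
      with hA
    set B := Finset.univ.filter (fun S : Finset V => separates S (u i) (v i) ∧ separates S (u i) z)
      with hB
    set C := Finset.univ.filter (fun S : Finset V => separates S (u i) (v i) ∧ separates S w z)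
      with hC
    have h1 : ∑ S ∈ A ∩ B, y S + ∑ S ∈ A \ B, y S = ∑ S ∈ A, y S :=
      Finset.sum_inter_add_sum_sdiff A B y
    have h2 : ∑ S ∈ B ∩ A, y S + ∑ S ∈ B \ A, y S = ∑ S ∈ B, y S :=
      Finset.sum_inter_add_sum_sdiff B A y
    rw [Finset.inter_comm B A] at h2
    have hsub1 : A \ B ⊆ C := by
      intro S hS
      rw [Finset.mem_sdiff, hA, hB, Finset.mem_filter] at hS
      obtain ⟨⟨_, hPi, hw⟩, hz⟩ := hS
      have hz' : ¬ separates S (u i) z := fun hh =>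
        hz (Finset.mem_filter.mpr ⟨Finset.mem_univ S, hPi, hh⟩)
      rw [hC, Finset.mem_filter]
      refine ⟨Finset.mem_univ S, hPi, ?_⟩
      rw [hsep_iff] at hw hz' ⊢
      tauto
    have hsub2 : B \ A ⊆ C := by
      intro S hS
      rw [Finset.mem_sdiff, hB, hA, Finset.mem_filter] at hS
      obtain ⟨⟨_, hPi, hz⟩, hw⟩ := hS
      have hw' : ¬ separates S (u i) w := fun hh =>
        hw (Finset.mem_filter.mpr ⟨Finset.mem_univ S, hPi, hh⟩)
      rw [hC, Finset.mem_filter]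
      refine ⟨Finset.mem_univ S, hPi, ?_⟩
      rw [hsep_iff] at hz hw' ⊢
      tauto
    have hx : ∑ S ∈ A \ B, y S ≤ ∑ S ∈ C, y S :=
      Finset.sum_le_sum_of_subset_of_nonneg hsub1 (fun S _ _ => hnn S)
    have hyl : ∑ S ∈ B \ A, y S ≤ ∑ S ∈ C, y S :=
      Finset.sum_le_sum_of_subset_of_nonneg hsub2 (fun S _ _ => hnn S)
    have hx0 : 0 ≤ ∑ S ∈ A \ B, y S := Finset.sum_nonneg fun S _ => hnn S
    have hy0 : 0 ≤ ∑ S ∈ B \ A, y S := Finset.sum_nonneg fun S _ => hnn S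
    rw [abs_sub_le_iff]
    constructor <;> linarith
  -- claim (4)
  have part4 : ∀ w z : V, ∑ i, |l i w - l i z| ≤ dist w z := by
    intro w z
    have hdc2 := hdc (fun S => separates S w z) (by infer_instance)
    have hdc2' : ∑ S ∈ Finset.univ.filter (fun S => separates S w z),
        ((Finset.univ.filter (fun i => separates S (u i) (v i))).card : ℝ) * y S
          = ∑ S ∈ Finset.univ.filter (fun S => separates S w z), y S :=
      Finset.sum_congr rfl fun S _ => hky S
    have hlast : ∑ S ∈ Finset.univ.filter (fun S : Finset V => separates S w z), y S
        ≤ dist w z := by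
      by_cases hwz : w = z
      · subst hwz
        rw [Finset.filter_false_of_mem (fun S _ => hsepself S w), Finset.sum_empty, dist_self]
      · exact hfeas w z hwz
    calc ∑ i, |l i w - l i z|
        ≤ ∑ i, ∑ S ∈ Finset.univ.filter
            (fun S => separates S (u i) (v i) ∧ separates S w z), y S :=
          Finset.sum_le_sum fun i _ => hbound i w z
      _ = ∑ S ∈ Finset.univ.filter (fun S => separates S w z),
            ((Finset.univ.filter (fun i => separates S (u i) (v i))).card : ℝ) * y S := hdc2
      _ = ∑ S ∈ Finset.univ.filter (fun S => separates S w z), y S := hdc2'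
      _ ≤ dist w z := hlast
  refine ⟨?_, ?_, ?_, part4⟩
  · -- (1) Lipschitz
    intro i
    refine LipschitzWith.of_dist_le_mul fun w z => ?_
    rw [Real.dist_eq, NNReal.coe_one, one_mul]
    calc |l i w - l i z| ≤ ∑ j, |l j w - l j z| :=
          Finset.single_le_sum (f := fun j => |l j w - l j z|)
            (fun j _ => abs_nonneg _) (Finset.mem_univ i)
      _ ≤ dist w z := part4 w z
  · -- (2)
    intro i
    have hlu : l i (u i) = 0 := by
      simp only [hl]
      rw [Finset.filter_false_of_mem (fun S _ h => hsepself S (u i) h.2), Finset.sum_empty]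
    have hlv : l i (v i) = dist (u i) (v i) := by
      simp only [hl]
      simpa [and_self] using hFi i
    rw [hlu, hlv, sub_zero]
  · -- (3)
    intro i j hij
    rw [hl]
    simp only [Finset.sum_filter]
    refine Finset.sum_congr rfl fun S _ => ?_
    by_cases hy : y S = 0
    · simp [hy]
    by_cases hsi : separates S (u i) (v i)
    · have hnj : ¬ separates S (u j) (v j) := fun h => hy (hkey S i j hij hsi h)
      have hiff : (separates S (u i) (v i) ∧ separates S (u i) (v j))
          ↔ (separates S (u i) (v i) ∧ separates S (u i) (u j)) := by
        rw [hsep_iff] at hnj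
        rw [hsep_iff S (u i) (v j), hsep_iff S (u i) (u j)]
        tauto
      exact if_congr hiff rfl rfl
    · simp [hsi]
end
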